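/- arXiv:2211.10912 — 8 statements merged into one kernel-verified Lean document; each statement's English description precedes it below -/
import Mathlib

section
/- For a nonempty set S ⊆ ℤⁿ, the following are equivalent: (i) the convex hull of S equals the union over all x ∈ ℝⁿ of the convex hulls of S ∩ N(x); (ii) every x in the convex hull of S lies in the convex hull of S ∩ N(x); (iii) for each x ∈ ℝⁿ, the intersection of the convex hull of S with the convex hull of N(x) equals the convex hull of S ∩ N(x). -/
noncomputable section

def coeZR {n : ℕ} (z : Fin n → ℤ) : Fin n → ℝ := fun i => (z i : ℝ)

def IntNbhd {n : ℕ} (x : Fin n → ℝ) : Set (Fin n → ℤ) :=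
  {z | ∀ i, |x i - (z i : ℝ)| < 1}

def IntegrallyConvexSet {n : ℕ} (S : Set (Fin n → ℤ)) : Prop :=
  ∀ x ∈ convexHull ℝ (coeZR '' S), x ∈ convexHull ℝ (coeZR '' (S ∩ IntNbhd x))

/-! If the points of `s` are pairwise at sup-distance at most `1`, write a point `x` of their
hull as a convex combination with positive weights `w_p`; then `|xᵢ - pᵢ| ≤ 1 - w_p < 1` for
every `p` used, so `x` is already in the hull of the points of `s` near it. Applied to the
integer points of a single integral neighbourhood this gives (i) ⇒ (ii). For (ii) ⇒ (iii), a
point of the hull of `N(x)` lies in the box `[⌊x⌋, ⌈x⌉]`, so its own neighbourhood lies in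
`N(x)`; (iii) ⇒ (ii) because `x` lies in the hull of `N(x)`. -/

open Finset in
theorem abs_sum_mul_sub_lt {ι : Type*} {t : Finset ι} {w c : ι → ℝ} {a r : ℝ}
    (hw₀ : ∀ k ∈ t, 0 ≤ w k) (hw₁ : ∑ k ∈ t, w k = 1) (hc : ∀ k ∈ t, |c k - a| ≤ r)
    {j : ι} (hj : j ∈ t) (hwj : 0 < w j) (hcj : |c j - a| < r) :
    |∑ k ∈ t, w k * c k - a| < r :=
  calc |∑ k ∈ t, w k * c k - a| = |∑ k ∈ t, w k * (c k - a)| := by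
        simp only [mul_sub, sum_sub_distrib, ← sum_mul, hw₁, one_mul]
    _ ≤ ∑ k ∈ t, |w k * (c k - a)| := abs_sum_le_sum_abs _ _
    _ = ∑ k ∈ t, w k * |c k - a| :=
        sum_congr rfl fun k hk => by rw [abs_mul, abs_of_nonneg (hw₀ k hk)]
    _ < ∑ k ∈ t, w k * r :=
        sum_lt_sum (fun k hk => mul_le_mul_of_nonneg_left (hc k hk) (hw₀ k hk))
          ⟨j, hj, mul_lt_mul_of_pos_left hcj hwj⟩
    _ = r := by rw [← sum_mul, hw₁, one_mul]

theorem mem_convexHull_sep_abs_sub_lt_one {ι : Type*} {s : Set (ι → ℝ)}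
    (hs : ∀ p ∈ s, ∀ q ∈ s, ∀ i, |p i - q i| ≤ 1) {x : ι → ℝ} (hx : x ∈ convexHull ℝ s) :
    x ∈ convexHull ℝ {p ∈ s | ∀ i, |x i - p i| < 1} := by
  obtain ⟨κ, _, z, w, hzs, -, hw₀, hw₁, rfl⟩ := eq_pos_convex_span_of_mem_convexHull hx
  have hz : ∀ j, z j ∈ s := fun j => hzs (Set.mem_range_self j)
  refine (convex_convexHull ℝ _).sum_mem (fun j _ => (hw₀ j).le) hw₁ fun j _ =>
    subset_convexHull ℝ _ ⟨hz j, fun i => ?_⟩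
  simpa [Finset.sum_apply] using abs_sum_mul_sub_lt (t := Finset.univ) (c := fun k => z k i)
    (fun k _ => (hw₀ k).le) hw₁ (fun k _ => hs _ (hz k) _ (hz j) i) (Finset.mem_univ j)
    (hw₀ j) (by simp)

section IntNbhd

variable {n : ℕ}

theorem mem_intNbhd_iff {x : Fin n → ℝ} {z : Fin n → ℤ} :
    z ∈ IntNbhd x ↔ ∀ i, ⌊x i⌋ ≤ z i ∧ z i ≤ ⌈x i⌉ := by
  refine forall_congr' fun i => ?_
  rw [abs_sub_lt_iff, Int.floor_le_iff, Int.le_ceil_iff, sub_lt_iff_lt_add', sub_lt_comm]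

theorem abs_sub_le_one_of_mem_intNbhd {y : Fin n → ℝ} {z z' : Fin n → ℤ}
    (hz : z ∈ IntNbhd y) (hz' : z' ∈ IntNbhd y) (i : Fin n) : |(z i : ℝ) - z' i| ≤ 1 := by
  obtain ⟨h₁, h₂⟩ := abs_lt.mp (hz i)
  obtain ⟨h₃, h₄⟩ := abs_lt.mp (hz' i)
  have hlt : z i < z' i + 2 := by exact_mod_cast (by linarith : (z i : ℝ) < z' i + 2)
  have hgt : z' i < z i + 2 := by exact_mod_cast (by linarith : (z' i : ℝ) < z i + 2)
  exact_mod_cast (abs_le.mpr ⟨by omega, by omega⟩ : |z i - z' i| ≤ 1)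

theorem coeZR_image_inter_intNbhd (A : Set (Fin n → ℤ)) (x : Fin n → ℝ) :
    coeZR '' (A ∩ IntNbhd x) = {p ∈ coeZR '' A | ∀ i, |x i - p i| < 1} := by
  ext p
  constructor
  · rintro ⟨z, ⟨hzA, hzx⟩, rfl⟩
    exact ⟨⟨z, hzA, rfl⟩, hzx⟩
  · rintro ⟨⟨z, hzA, rfl⟩, hzx⟩
    exact ⟨z, ⟨hzA, hzx⟩, rfl⟩

theorem mem_convexHull_inter_intNbhd_self {A : Set (Fin n → ℤ)} {x y : Fin n → ℝ}
    (hA : A ⊆ IntNbhd y) (hx : x ∈ convexHull ℝ (coeZR '' A)) :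
    x ∈ convexHull ℝ (coeZR '' (A ∩ IntNbhd x)) := by
  rw [coeZR_image_inter_intNbhd]
  refine mem_convexHull_sep_abs_sub_lt_one ?_ hx
  rintro _ ⟨z, hz, rfl⟩ _ ⟨z', hz', rfl⟩
  exact abs_sub_le_one_of_mem_intNbhd (hA hz) (hA hz')

theorem mem_convexHull_intNbhd_self (x : Fin n → ℝ) :
    x ∈ convexHull ℝ (coeZR '' IntNbhd x) := by
  have hvert : (Set.univ.pi fun i => ({(⌊x i⌋ : ℝ), (⌈x i⌉ : ℝ)} : Set ℝ)) ⊆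
      coeZR '' IntNbhd x := by
    intro p hp
    have hint : ∀ i, ∃ m : ℤ, (m = ⌊x i⌋ ∨ m = ⌈x i⌉) ∧ (m : ℝ) = p i := by
      intro i
      rcases hp i (Set.mem_univ i) with h | h
      · exact ⟨_, Or.inl rfl, h.symm⟩
      · exact ⟨_, Or.inr rfl, (Set.mem_singleton_iff.mp h).symm⟩
    choose z hz hzp using hint
    refine ⟨z, mem_intNbhd_iff.mpr fun i => ?_, funext hzp⟩
    have := Int.floor_le_ceil (x i)
    rcases hz i with h | h <;> rw [h] <;> exact ⟨by omega, by omega⟩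
  refine convexHull_mono hvert ?_
  rw [convexHull_pi]
  intro i _
  dsimp only
  rw [convexHull_pair, segment_eq_Icc (mod_cast Int.floor_le_ceil (x i))]
  exact ⟨Int.floor_le (x i), Int.le_ceil (x i)⟩

theorem intNbhd_subset_of_mem_convexHull_intNbhd {x y : Fin n → ℝ}
    (hy : y ∈ convexHull ℝ (coeZR '' IntNbhd x)) : IntNbhd y ⊆ IntNbhd x := by
  have hbox : y ∈ Set.univ.pi fun i => Set.Icc (⌊x i⌋ : ℝ) ⌈x i⌉ := by
    refine convexHull_min ?_ (convex_pi fun i _ => convex_Icc _ _) hy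
    rintro _ ⟨z, hz, rfl⟩ i _
    obtain ⟨hfloor, hceil⟩ := mem_intNbhd_iff.mp hz i
    exact ⟨(mod_cast hfloor : (⌊x i⌋ : ℝ) ≤ z i), (mod_cast hceil : (z i : ℝ) ≤ ⌈x i⌉)⟩
  intro z hz
  refine mem_intNbhd_iff.mpr fun i => ?_
  obtain ⟨hfloor, hceil⟩ := mem_intNbhd_iff.mp hz i
  obtain ⟨hlo, hhi⟩ := hbox i (Set.mem_univ i)
  exact ⟨(Int.le_floor.mpr hlo).trans hfloor, hceil.trans (Int.ceil_le.mpr hhi)⟩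

theorem integrallyConvexSet_iff_convexHull_eq_iUnion (S : Set (Fin n → ℤ)) :
    IntegrallyConvexSet S ↔
      convexHull ℝ (coeZR '' S) = ⋃ x, convexHull ℝ (coeZR '' (S ∩ IntNbhd x)) := by
  have hmono : ∀ x, convexHull ℝ (coeZR '' (S ∩ IntNbhd x)) ⊆ convexHull ℝ (coeZR '' S) :=
    fun x => convexHull_mono (Set.image_mono Set.inter_subset_left)
  constructor
  · intro h
    exact (Set.iUnion_subset hmono).antisymm' fun x hx => Set.mem_iUnion.mpr ⟨x, h x hx⟩
  · intro h x hx
    rw [h] at hx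
    obtain ⟨y, hy⟩ := Set.mem_iUnion.mp hx
    have hx' := mem_convexHull_inter_intNbhd_self Set.inter_subset_right hy
    exact convexHull_mono (Set.image_mono (Set.inter_subset_inter_left _ Set.inter_subset_left)) hx'

theorem integrallyConvexSet_iff_convexHull_inter_eq (S : Set (Fin n → ℤ)) :
    IntegrallyConvexSet S ↔ ∀ x, convexHull ℝ (coeZR '' S) ∩ convexHull ℝ (coeZR '' IntNbhd x) =
      convexHull ℝ (coeZR '' (S ∩ IntNbhd x)) := by
  constructor
  · intro h x
    refine Set.Subset.antisymm ?_ fun y hy =>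
      ⟨convexHull_mono (Set.image_mono Set.inter_subset_left) hy,
        convexHull_mono (Set.image_mono Set.inter_subset_right) hy⟩
    rintro y ⟨hyS, hyN⟩
    exact convexHull_mono (Set.image_mono (Set.inter_subset_inter_right _
      (intNbhd_subset_of_mem_convexHull_intNbhd hyN))) (h y hyS)
  · intro h x hx
    exact h x ▸ ⟨hx, mem_convexHull_intNbhd_self x⟩

end IntNbhd

theorem stmt0_general {n : ℕ} (S : Set (Fin n → ℤ)) :
    ((convexHull ℝ (coeZR '' S) = ⋃ x : Fin n → ℝ, convexHull ℝ (coeZR '' (S ∩ IntNbhd x))) ↔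
      (∀ x ∈ convexHull ℝ (coeZR '' S), x ∈ convexHull ℝ (coeZR '' (S ∩ IntNbhd x)))) ∧
    ((∀ x ∈ convexHull ℝ (coeZR '' S), x ∈ convexHull ℝ (coeZR '' (S ∩ IntNbhd x))) ↔
      (∀ x : Fin n → ℝ,
        convexHull ℝ (coeZR '' S) ∩ convexHull ℝ (coeZR '' (IntNbhd x)) =
          convexHull ℝ (coeZR '' (S ∩ IntNbhd x)))) :=
  ⟨(integrallyConvexSet_iff_convexHull_eq_iUnion S).symm,
    integrallyConvexSet_iff_convexHull_inter_eq S⟩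

theorem stmt0 {n : ℕ} (S : Set (Fin n → ℤ)) (hS : S.Nonempty) :
    ((convexHull ℝ (coeZR '' S) = ⋃ x : Fin n → ℝ, convexHull ℝ (coeZR '' (S ∩ IntNbhd x))) ↔
      (∀ x ∈ convexHull ℝ (coeZR '' S), x ∈ convexHull ℝ (coeZR '' (S ∩ IntNbhd x)))) ∧
    ((∀ x ∈ convexHull ℝ (coeZR '' S), x ∈ convexHull ℝ (coeZR '' (S ∩ IntNbhd x))) ↔
      (∀ x : Fin n → ℝ,
        convexHull ℝ (coeZR '' S) ∩ convexHull ℝ (coeZR '' (IntNbhd x)) =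
          convexHull ℝ (coeZR '' (S ∩ IntNbhd x)))) :=
  stmt0_general S
end
end

section
/- A nonempty set S ⊆ ℤⁿ is integrally convex if and only if for every pair of points y, y' ∈ S with ‖y − y'‖_∞ ≥ 2, the midpoint (y+y')/2 lies in the convex hull of S ∩ N((y+y')/2). -/
/-!
Only the converse needs an argument. Given `x` in the convex hull of `S`, keep the finitely many
points `T` of `S` lying in an integer box around some finite representation of `x`; the box also
contains the integral neighborhood of the midpoint of any two of its points. Among all
representations of `x` as a convex combination of `T` choose one minimizing the weighted sum of
squared Euclidean norms. If a point `y` of positive weight were outside `N(x)`, then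
`|x k - y k| ≥ 1` for some `k`, and, `x k` being the weighted mean of the `k`-th coordinates, a
second point `y'` of positive weight satisfies `|y k - y' k| ≥ 2`. Moving a small weight `ε` from
each of `y`, `y'` onto `2ε` times a representation of their midpoint `m` by points `z ∈ N(m)`
keeps `x` fixed and lowers the potential: `|z i - m i| ≤ |y i - y' i| / 2` in every coordinate,
strictly in coordinate `k`, so by the parallelogram law and the variance identity the points
representing `m` have weighted mean squared norm below `(‖y‖² + ‖y'‖²) / 2`.
-/

noncomputable section

open Finset

section StdSimplexWeights

variable {𝕜 ι : Type*} [Field 𝕜] [Fintype ι]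

theorem sum_smul_exchange {M : Type*} [AddCommGroup M] [Module 𝕜 M] [DecidableEq ι]
    (w ν : ι → 𝕜) (ε : 𝕜) (i j : ι) (q : ι → M) :
    ∑ k, (w k + ε * (2 * ν k - (if k = i then 1 else 0) - (if k = j then 1 else 0))) • q k =
      ∑ k, w k • q k + ε • ((2 : 𝕜) • ∑ k, ν k • q k - q i - q j) := by
  simp only [add_smul, mul_smul, sub_smul, ite_smul, one_smul, zero_smul, sum_add_distrib,
    sum_sub_distrib, ← smul_sum, sum_ite_eq', mem_univ, if_true]

variable [LinearOrder 𝕜] [IsStrictOrderedRing 𝕜] {E : Type*} [AddCommGroup E] [Module 𝕜 E]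

theorem mem_convexHull_image_iff_exists_stdSimplex (p : ι → E) (s : Set ι) (x : E) :
    x ∈ convexHull 𝕜 (p '' s) ↔
      ∃ w ∈ stdSimplex 𝕜 ι, ∑ i, w i • p i = x ∧ ∀ i, w i ≠ 0 → i ∈ s := by
  classical
  constructor
  · intro hx
    have hp : p '' s = Fintype.linearCombination 𝕜 p '' ((fun i ↦ Pi.single i 1) '' s) := by
      simp [Set.image_image, Fintype.linearCombination_apply_single]
    rw [hp, ← LinearMap.image_convexHull] at hx
    obtain ⟨w, hw, rfl⟩ := hx
    have hsupp : Convex 𝕜 {w : ι → 𝕜 | ∀ i, w i ≠ 0 → i ∈ s} := by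
      intro u hu v hv a b _ _ _ i hi
      by_contra hs
      simp [not_imp_comm.1 (hu i) hs, not_imp_comm.1 (hv i) hs] at hi
    refine ⟨w, ?_, (Fintype.linearCombination_apply 𝕜 p w).symm, ?_⟩
    · exact convexHull_min (by rintro _ ⟨i, -, rfl⟩; exact single_mem_stdSimplex 𝕜 i)
        (convex_stdSimplex 𝕜 ι) hw
    · refine convexHull_min ?_ hsupp hw
      rintro _ ⟨i, hi, rfl⟩ j hj
      obtain rfl : j = i := by by_contra h; simp [h] at hj
      exact hi
  · rintro ⟨w, hw, rfl, hs⟩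
    have hsum : ∑ i with w i ≠ 0, w i = 1 := by rw [sum_filter_ne_zero, hw.2]
    have := (univ.filter (w · ≠ 0)).centerMass_mem_convexHull (fun i _ ↦ hw.1 i)
      (hsum ▸ one_pos) (fun i hi ↦ Set.mem_image_of_mem p (hs i (mem_filter.1 hi).2))
    rwa [centerMass_eq_of_sum_1 _ _ hsum,
      sum_filter_of_ne fun i _ h ↦ left_ne_zero_of_smul h] at this

theorem exists_finset_subset_mem_convexHull_image {α : Type*} (f : α → E) {s : Set α} {x : E}
    (hx : x ∈ convexHull 𝕜 (f '' s)) : ∃ t : Finset α, ↑t ⊆ s ∧ x ∈ convexHull 𝕜 (f '' ↑t) := by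
  classical
  rw [convexHull_eq_union_convexHull_finite_subsets, Set.mem_iUnion₂] at hx
  obtain ⟨u, hu, hxu⟩ := hx
  obtain ⟨t, hts, rfl⟩ := subset_set_image_iff.1 hu
  exact ⟨t, hts, by rwa [coe_image] at hxu⟩

theorem exists_mem_stdSimplex_sum_mul_lt_of_midpoint (p : ι → E) (φ : ι → 𝕜) {w ν : ι → 𝕜}
    (hw : w ∈ stdSimplex 𝕜 ι) (hν : ν ∈ stdSimplex 𝕜 ι) {i j : ι} (hij : i ≠ j)
    (hi : w i ≠ 0) (hj : w j ≠ 0) (hνp : ∑ k, ν k • p k = (2⁻¹ : 𝕜) • (p i + p j))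
    (hφ : 2 * ∑ k, ν k * φ k < φ i + φ j) :
    ∃ w' ∈ stdSimplex 𝕜 ι, ∑ k, w' k • p k = ∑ k, w k • p k ∧
      ∑ k, w' k * φ k < ∑ k, w k * φ k := by
  classical
  set ε := min (w i) (w j)
  have hε : 0 < ε := lt_min ((hw.1 i).lt_of_ne' hi) ((hw.1 j).lt_of_ne' hj)
  set w' : ι → 𝕜 := fun k ↦
    w k + ε * (2 * ν k - (if k = i then 1 else 0) - (if k = j then 1 else 0))
  refine ⟨w', ⟨fun k ↦ ?_, ?_⟩, ?_, ?_⟩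
  · have hεν := mul_nonneg hε.le (hν.1 k)
    rcases eq_or_ne k i with rfl | hki
    · simp only [w', if_pos, if_neg hij]
      linarith [min_le_left (w k) (w j)]
    rcases eq_or_ne k j with rfl | hkj
    · simp only [w', if_pos, if_neg hki]
      linarith [min_le_right (w i) (w k)]
    · simp only [w', if_neg hki, if_neg hkj]
      linarith [hw.1 k]
  · have := sum_smul_exchange w ν ε i j (fun _ ↦ (1 : 𝕜))
    simp only [smul_eq_mul, mul_one, hw.2, hν.2] at this
    rw [this]
    ring
  · rw [sum_smul_exchange w ν ε i j p, hνp, smul_smul, mul_inv_cancel₀ two_ne_zero, one_smul,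
      add_sub_cancel_left, sub_self, smul_zero, add_zero]
  · have := sum_smul_exchange w ν ε i j φ
    simp only [smul_eq_mul] at this
    rw [this, add_lt_iff_neg_left]
    exact mul_neg_of_pos_of_neg hε (by linarith)

end StdSimplexWeights

theorem exists_mem_stdSimplex_minimizing {ι E : Type*} [Fintype ι] [NormedAddCommGroup E]
    [NormedSpace ℝ E] (p : ι → E) (φ : ι → ℝ) {x : E}
    (hx : x ∈ convexHull ℝ (Set.range p)) :
    ∃ w ∈ stdSimplex ℝ ι, ∑ i, w i • p i = x ∧
      ∀ w' ∈ stdSimplex ℝ ι, ∑ i, w' i • p i = x → ∑ i, w i * φ i ≤ ∑ i, w' i * φ i := by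
  have hK : IsCompact (stdSimplex ℝ ι ∩ {w | ∑ i, w i • p i = x}) :=
    (isCompact_stdSimplex ℝ ι).inter_right (isClosed_eq (by fun_prop) continuous_const)
  rw [← Set.image_univ, mem_convexHull_image_iff_exists_stdSimplex] at hx
  obtain ⟨w₀, hw₀, hw₀x, -⟩ := hx
  obtain ⟨w, ⟨hw, hwx⟩, hmin⟩ := hK.exists_isMinOn ⟨w₀, hw₀, hw₀x⟩
    (f := fun w ↦ ∑ i, w i * φ i) (by fun_prop)
  exact ⟨w, hw, hwx, fun w' hw' hw'x ↦ hmin ⟨hw', hw'x⟩⟩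

section WeightedMean

variable {𝕜 ι : Type*} [Field 𝕜] [LinearOrder 𝕜] [IsStrictOrderedRing 𝕜] [Fintype ι]
  {w : ι → 𝕜} {f : ι → 𝕜} {c : 𝕜}

theorem sum_mul_lt_of_le_of_lt (hw : w ∈ stdSimplex 𝕜 ι) (hle : ∀ i, w i ≠ 0 → f i ≤ c)
    {i₀ : ι} (hi₀ : w i₀ ≠ 0) (hlt : f i₀ < c) : ∑ i, w i * f i < c := by
  calc ∑ i, w i * f i < ∑ i, w i * c := by
        refine sum_lt_sum (fun i _ ↦ ?_) ⟨i₀, mem_univ _, ?_⟩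
        · rcases eq_or_ne (w i) 0 with h | h
          · simp [h]
          · exact mul_le_mul_of_nonneg_left (hle i h) (hw.1 i)
        · exact mul_lt_mul_of_pos_left hlt ((hw.1 i₀).lt_of_ne' hi₀)
    _ = c := by rw [← sum_mul, hw.2, one_mul]

theorem sum_mul_lt_of_forall_lt (hw : w ∈ stdSimplex 𝕜 ι) (hlt : ∀ i, w i ≠ 0 → f i < c) :
    ∑ i, w i * f i < c := by
  obtain ⟨i₀, -, hi₀⟩ := exists_ne_zero_of_sum_ne_zero (hw.2 ▸ one_ne_zero)
  exact sum_mul_lt_of_le_of_lt hw (fun i hi ↦ (hlt i hi).le) hi₀ (hlt i₀ hi₀)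

theorem exists_lt_of_lt_sum_mul (hw : w ∈ stdSimplex 𝕜 ι) {i₀ : ι} (hi₀ : w i₀ ≠ 0)
    (hlt : f i₀ < ∑ i, w i * f i) : ∃ i, w i ≠ 0 ∧ ∑ i, w i * f i < f i := by
  by_contra! h
  exact (sum_mul_lt_of_le_of_lt hw h hi₀ hlt).false

end WeightedMean

theorem exists_two_le_abs_sub_of_one_le_abs_sub {ι : Type*} [Fintype ι] {w : ι → ℝ}
    (hw : w ∈ stdSimplex ℝ ι) (f : ι → ℤ) {i₀ : ι} (hi₀ : w i₀ ≠ 0)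
    (hfar : 1 ≤ |∑ i, w i * f i - f i₀|) : ∃ i, w i ≠ 0 ∧ 2 ≤ |f i₀ - f i| := by
  rcases le_abs'.1 hfar with hbelow | habove
  · obtain ⟨i, hi, hlt⟩ := exists_lt_of_lt_sum_mul hw (f := fun i ↦ -(f i : ℝ)) hi₀
      (by simp only [mul_neg, sum_neg_distrib]; linarith)
    refine ⟨i, hi, ?_⟩
    have : (f i : ℝ) + 1 < f i₀ := by simp only [mul_neg, sum_neg_distrib] at hlt; linarith
    have : f i + 1 < f i₀ := by exact_mod_cast this
    rw [abs_of_pos (by omega)]; omega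
  · obtain ⟨i, hi, hlt⟩ := exists_lt_of_lt_sum_mul hw (f := fun i ↦ (f i : ℝ)) hi₀
      (by linarith)
    refine ⟨i, hi, ?_⟩
    have : (f i₀ : ℝ) + 1 < f i := by linarith
    have : f i₀ + 1 < f i := by exact_mod_cast this
    rw [abs_of_neg (by omega)]; omega

theorem sum_mul_sq_eq_sum_mul_sq_sub_add_sq {𝕜 ι : Type*} [CommRing 𝕜] [Fintype ι]
    {w a : ι → 𝕜} {m : 𝕜} (hw : ∑ i, w i = 1) (hm : ∑ i, w i * a i = m) :
    ∑ i, w i * a i ^ 2 = ∑ i, w i * (a i - m) ^ 2 + m ^ 2 := by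
  have : ∑ i, w i * (a i - m) ^ 2 = ∑ i, w i * a i ^ 2 - 2 * m * ∑ i, w i * a i +
      m ^ 2 * ∑ i, w i := by
    rw [mul_sum, mul_sum, ← sum_sub_distrib, ← sum_add_distrib]
    exact sum_congr rfl fun i _ ↦ by ring
  rw [this, hm, hw]
  ring

theorem abs_add_sub_two_mul_lt_two {a b z : ℤ} (h : |2⁻¹ * ((a : ℝ) + b) - z| < 1) :
    |a + b - 2 * z| < 2 := by
  have : |((a + b - 2 * z : ℤ) : ℝ)| < 2 := by
    rw [show ((a + b - 2 * z : ℤ) : ℝ) = 2 * (2⁻¹ * ((a : ℝ) + b) - z) by push_cast; ring,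
      abs_mul, abs_two]
    linarith
  exact_mod_cast this

theorem sq_add_sub_two_mul_le {a b z : ℤ} (h : |a + b - 2 * z| < 2) :
    (a + b - 2 * z) ^ 2 ≤ (a - b) ^ 2 := by
  -- `a + b - 2 * z` and `a - b` have the same parity, so the former vanishes when `a = b`.
  rw [sq_le_sq]
  rcases abs_cases (a + b - 2 * z) with ⟨h1, _⟩ | ⟨h1, _⟩ <;>
    rcases abs_cases (a - b) with ⟨h2, _⟩ | ⟨h2, _⟩ <;> omega

theorem sq_add_sub_two_mul_lt {a b z : ℤ} (h : |a + b - 2 * z| < 2) (hab : 2 ≤ |a - b|) :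
    (a + b - 2 * z) ^ 2 < (a - b) ^ 2 := by
  rw [sq_lt_sq]
  omega

theorem sq_sub_midpoint_eq (a b z : ℤ) :
    ((z : ℝ) - 2⁻¹ * (a + b)) ^ 2 = ((a + b - 2 * z : ℤ) : ℝ) ^ 2 / 4 := by
  push_cast; ring

theorem sq_half_sub_eq (a b : ℤ) : (2⁻¹ * ((a : ℝ) - b)) ^ 2 = ((a - b : ℤ) : ℝ) ^ 2 / 4 := by
  push_cast; ring

theorem sum_sq_sub_midpoint_lt {n : ℕ} {y y' z : Fin n → ℤ} (hfar : ∃ k, 2 ≤ |y k - y' k|)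
    (hz : z ∈ IntNbhd ((2⁻¹ : ℝ) • (coeZR y + coeZR y'))) :
    ∑ i, ((z i : ℝ) - 2⁻¹ * (y i + y' i)) ^ 2 < ∑ i, (2⁻¹ * ((y i : ℝ) - y' i)) ^ 2 := by
  have hz' i : |y i + y' i - 2 * z i| < 2 :=
    abs_add_sub_two_mul_lt_two (by simpa [coeZR] using hz i)
  obtain ⟨k, hk⟩ := hfar
  simp only [sq_sub_midpoint_eq, sq_half_sub_eq]
  refine sum_lt_sum (fun i _ ↦ ?_) ⟨k, mem_univ k, ?_⟩
  · exact div_le_div_of_nonneg_right (by exact_mod_cast sq_add_sub_two_mul_le (hz' i))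
      zero_le_four
  · exact div_lt_div_of_pos_right (by exact_mod_cast sq_add_sub_two_mul_lt (hz' k) hk)
      zero_lt_four

def sqNorm {n : ℕ} (z : Fin n → ℤ) : ℝ := ∑ i, (z i : ℝ) ^ 2

theorem two_mul_sum_mul_sqNorm_lt_of_midpoint {n : ℕ} {ι : Type*} [Fintype ι] {ν : ι → ℝ}
    (hν : ν ∈ stdSimplex ℝ ι) (z : ι → Fin n → ℤ) {y y' : Fin n → ℤ}
    (hfar : ∃ k, 2 ≤ |y k - y' k|)
    (hm : ∑ k, ν k • coeZR (z k) = (2⁻¹ : ℝ) • (coeZR y + coeZR y'))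
    (hz : ∀ k, ν k ≠ 0 → z k ∈ IntNbhd ((2⁻¹ : ℝ) • (coeZR y + coeZR y'))) :
    2 * ∑ k, ν k * sqNorm (z k) < sqNorm y + sqNorm y' := by
  have hmean i : ∑ k, ν k * (z k i : ℝ) = 2⁻¹ * (y i + y' i) := by
    simpa [coeZR, Finset.sum_apply] using congrFun hm i
  have hvar : ∑ k, ν k * sqNorm (z k) =
      ∑ k, ν k * ∑ i, ((z k i : ℝ) - 2⁻¹ * (y i + y' i)) ^ 2 +
        ∑ i, (2⁻¹ * ((y i : ℝ) + y' i)) ^ 2 := by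
    simp only [sqNorm, mul_sum]
    rw [sum_comm, sum_comm (γ := ι), ← sum_add_distrib]
    exact sum_congr rfl fun i _ ↦ sum_mul_sq_eq_sum_mul_sq_sub_add_sq hν.2 (hmean i)
  have hlt := sum_mul_lt_of_forall_lt hν fun k hk ↦ sum_sq_sub_midpoint_lt hfar (hz k hk)
  have hpar : sqNorm y + sqNorm y' =
      2 * (∑ i, (2⁻¹ * ((y i : ℝ) - y' i)) ^ 2 + ∑ i, (2⁻¹ * ((y i : ℝ) + y' i)) ^ 2) := by
    simp only [sqNorm, ← sum_add_distrib, mul_sum]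
    exact sum_congr rfl fun i _ ↦ by ring
  linarith

theorem IntNbhd_midpoint_subset_Icc {n : ℕ} {lo hi y y' : Fin n → ℤ} (hy : y ∈ Set.Icc lo hi)
    (hy' : y' ∈ Set.Icc lo hi) :
    IntNbhd ((2⁻¹ : ℝ) • (coeZR y + coeZR y')) ⊆ Set.Icc lo hi := by
  intro z hz
  have hbounds i : (lo i : ℝ) - 1 < z i ∧ (z i : ℝ) < hi i + 1 := by
    have hzi := abs_lt.1 (hz i)
    simp only [coeZR, Pi.smul_apply, Pi.add_apply, smul_eq_mul] at hzi
    constructor <;> linarith [(Int.cast_le.2 (hy.1 i) : (lo i : ℝ) ≤ y i),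
      (Int.cast_le.2 (hy'.1 i) : (lo i : ℝ) ≤ y' i), (Int.cast_le.2 (hy.2 i) : (y i : ℝ) ≤ hi i),
      (Int.cast_le.2 (hy'.2 i) : (y' i : ℝ) ≤ hi i)]
  exact ⟨fun i ↦ Int.sub_one_lt_iff.1 (by exact_mod_cast (hbounds i).1),
    fun i ↦ Int.lt_add_one_iff.1 (by exact_mod_cast (hbounds i).2)⟩

theorem exists_finset_midpoint_closed {n : ℕ} (S : Set (Fin n → ℤ)) {x : Fin n → ℝ}
    (hx : x ∈ convexHull ℝ (coeZR '' S)) :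
    ∃ T : Finset (Fin n → ℤ), ↑T ⊆ S ∧ x ∈ convexHull ℝ (coeZR '' ↑T) ∧
      ∀ y ∈ T, ∀ y' ∈ T, S ∩ IntNbhd ((2⁻¹ : ℝ) • (coeZR y + coeZR y')) ⊆ ↑T := by
  classical
  obtain ⟨F, hFS, hxF⟩ := exists_finset_subset_mem_convexHull_image coeZR hx
  obtain ⟨lo, hlo⟩ := F.bddBelow
  obtain ⟨hi, hhi⟩ := F.bddAbove
  refine ⟨{z ∈ Icc lo hi | z ∈ S}, fun z hz ↦ (mem_filter.1 hz).2,
    convexHull_mono (Set.image_mono fun z hz ↦ ?_) hxF, fun y hy y' hy' z hz ↦ ?_⟩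
  · simp [hFS hz, hlo hz, hhi hz]
  · rw [mem_filter, mem_Icc] at hy hy'
    exact mem_filter.2 ⟨mem_Icc.2 (IntNbhd_midpoint_subset_Icc hy.1 hy'.1 hz.2), hz.1⟩

theorem mem_IntNbhd_of_minimizing {n : ℕ} {ι : Type*} [Fintype ι] {S : Set (Fin n → ℤ)}
    (H : ∀ y ∈ S, ∀ y' ∈ S, (∃ i, 2 ≤ |y i - y' i|) →
      (2⁻¹ : ℝ) • (coeZR y + coeZR y') ∈
        convexHull ℝ (coeZR '' (S ∩ IntNbhd ((2⁻¹ : ℝ) • (coeZR y + coeZR y')))))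
    {p : ι → Fin n → ℤ} (hpS : ∀ i, p i ∈ S)
    (hp : ∀ i j, S ∩ IntNbhd ((2⁻¹ : ℝ) • (coeZR (p i) + coeZR (p j))) ⊆ Set.range p)
    {x : Fin n → ℝ} {w : ι → ℝ} (hw : w ∈ stdSimplex ℝ ι) (hwx : ∑ i, w i • coeZR (p i) = x)
    (hmin : ∀ w' ∈ stdSimplex ℝ ι, ∑ i, w' i • coeZR (p i) = x →
      ∑ i, w i * sqNorm (p i) ≤ ∑ i, w' i * sqNorm (p i))
    {i₀ : ι} (hi₀ : w i₀ ≠ 0) : p i₀ ∈ IntNbhd x := by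
  by_contra hx
  obtain ⟨k, hk⟩ : ∃ k, 1 ≤ |x k - p i₀ k| := by simpa [IntNbhd] using hx
  have hxk : x k = ∑ i, w i * (p i k : ℝ) := by simp [← hwx, coeZR, Finset.sum_apply]
  obtain ⟨i₁, hi₁, hfar⟩ :=
    exists_two_le_abs_sub_of_one_le_abs_sub hw (fun i ↦ p i k) hi₀ (hxk ▸ hk)
  have hne : i₀ ≠ i₁ := by rintro rfl; simp at hfar
  set m := (2⁻¹ : ℝ) • (coeZR (p i₀) + coeZR (p i₁))
  have hmp : coeZR '' (S ∩ IntNbhd m) ⊆ (coeZR ∘ p) '' {i | p i ∈ IntNbhd m} := by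
    rintro _ ⟨z, hz, rfl⟩
    obtain ⟨i, rfl⟩ := hp i₀ i₁ hz
    exact ⟨i, hz.2, rfl⟩
  obtain ⟨ν, hν, hνm, hνN⟩ := (mem_convexHull_image_iff_exists_stdSimplex _ _ _).1
    (convexHull_mono hmp (H _ (hpS i₀) _ (hpS i₁) ⟨k, hfar⟩))
  obtain ⟨w', hw', hw'x, hlt⟩ := exists_mem_stdSimplex_sum_mul_lt_of_midpoint (coeZR ∘ p)
    (sqNorm ∘ p) hw hν hne hi₀ hi₁ hνm
    (two_mul_sum_mul_sqNorm_lt_of_midpoint hν p ⟨k, hfar⟩ hνm hνN)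
  exact (hmin w' hw' (hw'x.trans hwx)).not_gt hlt

theorem integrallyConvexSet_of_midpoint {n : ℕ} (S : Set (Fin n → ℤ))
    (H : ∀ y ∈ S, ∀ y' ∈ S, (∃ i, 2 ≤ |y i - y' i|) →
      (2⁻¹ : ℝ) • (coeZR y + coeZR y') ∈
        convexHull ℝ (coeZR '' (S ∩ IntNbhd ((2⁻¹ : ℝ) • (coeZR y + coeZR y'))))) :
    IntegrallyConvexSet S := by
  intro x hx
  obtain ⟨T, hTS, hxT, hT⟩ := exists_finset_midpoint_closed S hx
  set p : T → Fin n → ℤ := Subtype.val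
  rw [Set.image_eq_range] at hxT
  obtain ⟨w, hw, hwx, hmin⟩ := exists_mem_stdSimplex_minimizing (coeZR ∘ p) (sqNorm ∘ p) hxT
  have hsupp i (hi : w i ≠ 0) : p i ∈ S ∩ IntNbhd x :=
    ⟨hTS i.2, mem_IntNbhd_of_minimizing H (fun i ↦ hTS i.2)
      (fun i j z hz ↦ ⟨⟨z, hT _ i.2 _ j.2 hz⟩, rfl⟩) hw hwx hmin hi⟩
  have hx' := (mem_convexHull_image_iff_exists_stdSimplex (coeZR ∘ p) {i | p i ∈ S ∩ IntNbhd x}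
    x).2 ⟨w, hw, hwx, hsupp⟩
  rw [Set.image_comp] at hx'
  exact convexHull_mono (Set.image_mono (Set.image_subset_iff.2 fun _ h ↦ h)) hx'

theorem stmt2_general {n : ℕ} (S : Set (Fin n → ℤ)) :
    IntegrallyConvexSet S ↔
      ∀ y ∈ S, ∀ y' ∈ S, (∃ i, 2 ≤ |y i - y' i|) →
        (2⁻¹ : ℝ) • (coeZR y + coeZR y') ∈
          convexHull ℝ (coeZR '' (S ∩ IntNbhd ((2⁻¹ : ℝ) • (coeZR y + coeZR y')))) := by
  refine ⟨fun hS y hy y' hy' _ ↦ hS _ ?_, integrallyConvexSet_of_midpoint S⟩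
  rw [smul_add]
  exact convex_convexHull ℝ _ (subset_convexHull ℝ _ (Set.mem_image_of_mem coeZR hy))
    (subset_convexHull ℝ _ (Set.mem_image_of_mem coeZR hy')) (by norm_num) (by norm_num)
    (by norm_num)

theorem stmt2 {n : ℕ} (S : Set (Fin n → ℤ)) (hS : S.Nonempty) :
    IntegrallyConvexSet S ↔
      ∀ y ∈ S, ∀ y' ∈ S, (∃ i, 2 ≤ |y i - y' i|) →
        (2⁻¹ : ℝ) • (coeZR y + coeZR y') ∈
          convexHull ℝ (coeZR '' (S ∩ IntNbhd ((2⁻¹ : ℝ) • (coeZR y + coeZR y')))) :=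
  stmt2_general S
end
end

section
/- Let S ⊆ ℤⁿ be an integrally convex set. For any face F of the convex hull of S, the set F ∩ ℤⁿ is integrally convex. -/
noncomputable section

/-!
The face `F` of `conv S` is cut out by a supporting hyperplane `f = M` with `f ≤ M` on `conv S`.
For `x ∈ conv (F ∩ ℤⁿ)`, integral convexity of `S` writes `x` as a convex combination of points
of `S ∩ N(x)`. Since `f x = M` and `f ≤ M` on these points, every point carrying positive weight
lies on the hyperplane, hence in `F ∩ ℤⁿ ∩ N(x)`.
-/

open Finset in
theorem mem_convexHull_sep_eq_of_le {𝕜 E : Type*} [Field 𝕜] [LinearOrder 𝕜]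
    [IsStrictOrderedRing 𝕜] [AddCommGroup E] [Module 𝕜 E] {A : Set E} {x : E}
    (f : E →ₗ[𝕜] 𝕜) {M : 𝕜} (hA : ∀ a ∈ A, f a ≤ M) (hx : x ∈ convexHull 𝕜 A) (hfx : f x = M) :
    x ∈ convexHull 𝕜 {a ∈ A | f a = M} := by
  rw [_root_.convexHull_eq] at hx
  obtain ⟨ι, t, w, z, hw₀, hw₁, hz, rfl⟩ := hx
  have hgap : ∑ i ∈ t, w i * (M - f (z i)) = 0 := by
    rw [← hfx, centerMass_eq_of_sum_1 _ _ hw₁]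
    simp only [mul_sub, sum_sub_distrib, ← sum_mul, hw₁, one_mul, map_sum, map_smul, smul_eq_mul,
      sub_self]
  have hterm := (sum_eq_zero_iff_of_nonneg fun i hi =>
    mul_nonneg (hw₀ i hi) (sub_nonneg.2 (hA _ (hz i hi)))).1 hgap
  rw [← centerMass_filter_ne_zero]
  refine centerMass_mem_convexHull _ (fun i hi => hw₀ i (mem_filter.1 hi).1)
    (by rw [sum_filter_ne_zero, hw₁]; exact one_pos) fun i hi => ?_
  obtain ⟨hi, hwi⟩ := mem_filter.1 hi
  exact ⟨hz i hi, (sub_eq_zero.1 ((mul_eq_zero.1 (hterm i hi)).resolve_left hwi)).symm⟩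

theorem integrallyConvexSet_empty {n : ℕ} : IntegrallyConvexSet (∅ : Set (Fin n → ℤ)) := by
  simp [IntegrallyConvexSet]

theorem IntegrallyConvexSet.setOf_mem_convexHull_and_eq {n : ℕ} {S : Set (Fin n → ℤ)}
    (hS : IntegrallyConvexSet S) (f : (Fin n → ℝ) →ₗ[ℝ] ℝ) {M : ℝ}
    (hM : ∀ y ∈ convexHull ℝ (coeZR '' S), f y ≤ M) :
    IntegrallyConvexSet {z | coeZR z ∈ convexHull ℝ (coeZR '' S) ∧ f (coeZR z) = M} := by
  intro x hx
  have hxF : x ∈ convexHull ℝ (coeZR '' S) ∩ {y | f y = M} :=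
    convexHull_min (by rintro _ ⟨z, hz, rfl⟩; exact hz)
      ((convex_convexHull ℝ _).inter (convex_hyperplane f.isLinear M)) hx
  have hle : ∀ a ∈ coeZR '' (S ∩ IntNbhd x), f a ≤ M := by
    rintro _ ⟨z, hz, rfl⟩
    exact hM _ (subset_convexHull ℝ _ ⟨z, hz.1, rfl⟩)
  refine convexHull_mono ?_ (mem_convexHull_sep_eq_of_le f hle (hS x hxF.1) hxF.2)
  rintro _ ⟨⟨z, ⟨hzS, hzN⟩, rfl⟩, hfz⟩
  exact ⟨z, ⟨⟨subset_convexHull ℝ _ ⟨z, hzS, rfl⟩, hfz⟩, hzN⟩, rfl⟩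

theorem IntegrallyConvexSet.setOf_forall_le {n : ℕ} {S : Set (Fin n → ℤ)}
    (hS : IntegrallyConvexSet S) (f : (Fin n → ℝ) →ₗ[ℝ] ℝ) :
    IntegrallyConvexSet {z | coeZR z ∈ convexHull ℝ (coeZR '' S) ∧
      ∀ y ∈ convexHull ℝ (coeZR '' S), f y ≤ f (coeZR z)} := by
  rcases Set.eq_empty_or_nonempty {z | coeZR z ∈ convexHull ℝ (coeZR '' S) ∧
      ∀ y ∈ convexHull ℝ (coeZR '' S), f y ≤ f (coeZR z)} with hF | ⟨z₀, hz₀, hmax₀⟩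
  · rw [hF]
    exact integrallyConvexSet_empty
  · convert hS.setOf_mem_convexHull_and_eq f hmax₀ using 3 with z
    refine and_congr_right fun hz => ⟨fun hmax => (hmax₀ _ hz).antisymm (hmax _ hz₀), ?_⟩
    exact fun heq y hy => heq ▸ hmax₀ y hy

theorem stmt3 {n : ℕ} (S : Set (Fin n → ℤ)) (h : IntegrallyConvexSet S) (c : Fin n → ℝ) :
    IntegrallyConvexSet {z : Fin n → ℤ |
      coeZR z ∈ convexHull ℝ (coeZR '' S) ∧
      ∀ y ∈ convexHull ℝ (coeZR '' S), ∑ i, c i * y i ≤ ∑ i, c i * coeZR z i} :=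
  h.setOf_forall_le (dotProductBilin ℝ ℝ c)
end
end

section
/- Let S ⊆ ℤⁿ be an integrally convex set, y ∈ S, and d ∈ ℤⁿ. If y + kd ∈ S for all integers k ≥ 1, then for every z ∈ S we have z + kd ∈ S for all integers k ≥ 1. -/
/-!
Let `z ∈ S`, `a = z + d`, `v = y - z`, and pick an integer `K > ‖v‖₁` (so `y + K • d ∈ S`).
The point `x = a + v / K` lies on the segment from `z` to `y + K • d`, hence in the convex hull
of `S`. Every lattice point `w` of the integral neighbourhood of `x` satisfies
`w - a ∈ {-1, 0, 1}ⁿ` with the signs of `v`, so the functional `u ↦ sign(v) ⬝ᵥ (u - a)` equals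
`‖w - a‖₁ ≥ 1` at each such `w ≠ a`, but only `‖v‖₁ / K < 1` at `x`. Integral convexity
therefore forces `a ∈ S`, and induction on `k` gives the theorem.
-/

noncomputable section

theorem Int.sign_mul_eq_abs_of_abs_mul_sub_lt {K v m : ℤ} (hv : |v| < K) (hm : |K * m - v| < K) :
    v.sign * m = |m| := by
  rw [abs_lt] at hv hm
  obtain ⟨hm₁, hm₂⟩ : -1 ≤ m ∧ m ≤ 1 := by constructor <;> nlinarith
  interval_cases m
  · simp [Int.sign_eq_neg_one_of_neg (by omega : v < 0)]
  · simp
  · simp [Int.sign_eq_one_of_pos (by omega : 0 < v)]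

theorem one_le_sum_abs_sub {ι : Type*} [Fintype ι] {u w : ι → ℤ} (h : u ≠ w) :
    1 ≤ ∑ i, |u i - w i| := by
  obtain ⟨i, hi⟩ := Function.ne_iff.1 h
  calc 1 ≤ |u i - w i| := Int.one_le_abs (sub_ne_zero.2 hi)
    _ ≤ ∑ j, |u j - w j| :=
      Finset.single_le_sum (f := fun j => |u j - w j|) (fun j _ => abs_nonneg _) (Finset.mem_univ i)

section coeZR

variable {n : ℕ}

@[simp]
theorem coeZR_apply (z : Fin n → ℤ) (i : Fin n) : coeZR z i = z i := rfl

@[simp]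
theorem coeZR_add (u w : Fin n → ℤ) : coeZR (u + w) = coeZR u + coeZR w := by
  ext; simp

@[simp]
theorem coeZR_sub (u w : Fin n → ℤ) : coeZR (u - w) = coeZR u - coeZR w := by
  ext; simp

@[simp]
theorem coeZR_zsmul (k : ℤ) (u : Fin n → ℤ) : coeZR (k • u) = (k : ℝ) • coeZR u := by
  ext; simp

theorem coeZR_dotProduct (u w : Fin n → ℤ) : coeZR u ⬝ᵥ coeZR w = ((u ⬝ᵥ w : ℤ) : ℝ) := by
  simp [dotProduct]

theorem abs_mul_sub_sub_lt_of_mem_intNbhd {K : ℤ} (hK : 0 < K) {a v w : Fin n → ℤ}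
    (hw : w ∈ IntNbhd (coeZR a + (K : ℝ)⁻¹ • coeZR v)) (i : Fin n) :
    |K * (w i - a i) - v i| < K := by
  have hK' : (0 : ℝ) < K := by exact_mod_cast hK
  have key : ((K * (w i - a i) - v i : ℤ) : ℝ) = K * ((w i : ℝ) - (a i + (K : ℝ)⁻¹ * v i)) := by
    push_cast; field_simp; ring
  have : |((K * (w i - a i) - v i : ℤ) : ℝ)| < K := by
    rw [key, abs_mul, abs_of_pos hK', abs_sub_comm]
    exact mul_lt_of_lt_one_right hK' (hw i)
  exact_mod_cast this

end coeZR

namespace IntegrallyConvexSet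

variable {n : ℕ} {S : Set (Fin n → ℤ)}

theorem le_of_forall_le (hS : IntegrallyConvexSet S) {x : Fin n → ℝ}
    (hx : x ∈ convexHull ℝ (coeZR '' S)) (ℓ : (Fin n → ℝ) →ₗ[ℝ] ℝ) {c : ℝ}
    (hℓ : ∀ w ∈ S ∩ IntNbhd x, c ≤ ℓ (coeZR w)) : c ≤ ℓ x :=
  convexHull_min (t := {u | c ≤ ℓ u}) (Set.image_subset_iff.2 hℓ)
    (convex_halfSpace_ge ℓ.isLinear c) (hS x hx)

theorem add_mem_of_add_smul_mem (hS : IntegrallyConvexSet S) {y z d : Fin n → ℤ} {K : ℤ}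
    (hK : ∑ i, |y i - z i| < K) (hz : z ∈ S) (hyK : y + K • d ∈ S) : z + d ∈ S := by
  by_contra ha
  set v := y - z
  set a := z + d
  have hK₀ : 0 < K := (Finset.sum_nonneg fun i _ => abs_nonneg (y i - z i)).trans_lt hK
  have hK₁ : (1 : ℝ) ≤ K := by exact_mod_cast hK₀
  set x : Fin n → ℝ := coeZR z + (K : ℝ)⁻¹ • (coeZR (y + K • d) - coeZR z)
  have hxS : x ∈ convexHull ℝ (coeZR '' S) :=
    (convex_convexHull ℝ _).add_smul_sub_mem
      (subset_convexHull ℝ _ (Set.mem_image_of_mem _ hz))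
      (subset_convexHull ℝ _ (Set.mem_image_of_mem _ hyK))
      (Set.mem_Icc.2 ⟨by positivity, inv_le_one_of_one_le₀ hK₁⟩)
  have hx : x = coeZR a + (K : ℝ)⁻¹ • coeZR v := by
    simp only [x, a, v, coeZR_add, coeZR_sub, coeZR_zsmul]
    rw [add_sub_right_comm, smul_add, smul_smul, inv_mul_cancel₀ (by positivity), one_smul]
    abel
  set s : Fin n → ℤ := fun i => (v i).sign
  have hw : ∀ w ∈ S ∩ IntNbhd x,
      ((s ⬝ᵥ a : ℤ) : ℝ) + 1 ≤ dotProductBilin ℝ ℝ (coeZR s) (coeZR w) := by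
    rintro w ⟨hwS, hwx⟩
    have hsw : s ⬝ᵥ (w - a) = ∑ i, |w i - a i| := by
      refine Finset.sum_congr rfl fun i _ => Int.sign_mul_eq_abs_of_abs_mul_sub_lt (K := K) ?_ ?_
      · exact (Finset.single_le_sum (f := fun j => |v j|) (fun j _ => abs_nonneg _)
          (Finset.mem_univ i)).trans_lt hK
      · exact abs_mul_sub_sub_lt_of_mem_intNbhd hK₀ (hx ▸ hwx) i
    have := one_le_sum_abs_sub (ne_of_mem_of_not_mem hwS ha)
    rw [dotProductBilin_apply_apply, coeZR_dotProduct]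
    rw [dotProduct_sub] at hsw
    exact_mod_cast (by omega : s ⬝ᵥ a + 1 ≤ s ⬝ᵥ w)
  have hsv : s ⬝ᵥ v = ∑ i, |v i| := Finset.sum_congr rfl fun i _ => Int.sign_mul_self_eq_abs _
  have hxs : dotProductBilin ℝ ℝ (coeZR s) x < ((s ⬝ᵥ a : ℤ) : ℝ) + 1 := by
    rw [dotProductBilin_apply_apply, hx, dotProduct_add, dotProduct_smul, coeZR_dotProduct,
      coeZR_dotProduct, hsv, smul_eq_mul, add_lt_add_iff_left, inv_mul_lt_one₀ (by positivity)]
    exact_mod_cast hK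
  exact hxs.not_ge (hS.le_of_forall_le hxS _ hw)

theorem add_mem_of_forall_add_smul_mem (hS : IntegrallyConvexSet S) {y z d : Fin n → ℤ}
    (hyd : ∀ k : ℤ, 1 ≤ k → y + k • d ∈ S) (hz : z ∈ S) : z + d ∈ S := by
  have hv : 0 ≤ ∑ i, |y i - z i| := Finset.sum_nonneg fun i _ => abs_nonneg _
  exact hS.add_mem_of_add_smul_mem (lt_add_one _) hz (hyd _ (by omega))

end IntegrallyConvexSet

theorem stmt4_general {n : ℕ} (S : Set (Fin n → ℤ)) (h : IntegrallyConvexSet S)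
    (y : Fin n → ℤ) (d : Fin n → ℤ)
    (hyd : ∀ k : ℤ, 1 ≤ k → y + k • d ∈ S) :
    ∀ z ∈ S, ∀ k : ℤ, 1 ≤ k → z + k • d ∈ S := by
  intro z hz k hk
  induction k, hk using Int.leInduction with
  | base => simpa only [one_smul] using h.add_mem_of_forall_add_smul_mem hyd hz
  | succ m _ ih =>
    rw [add_smul, one_smul, ← add_assoc]
    exact h.add_mem_of_forall_add_smul_mem hyd ih

theorem stmt4 {n : ℕ} (S : Set (Fin n → ℤ)) (h : IntegrallyConvexSet S)
    (y : Fin n → ℤ) (hy : y ∈ S) (d : Fin n → ℤ)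
    (hyd : ∀ k : ℤ, 1 ≤ k → y + k • d ∈ S) :
    ∀ z ∈ S, ∀ k : ℤ, 1 ≤ k → z + k • d ∈ S :=
  stmt4_general S h y d hyd
end
end

section
/- If a set S ⊆ ℤⁿ is integrally convex, then its convex hull is a box-integer polyhedron; conversely, if P ⊆ ℝⁿ is a box-integer polyhedron, then S = P ∩ ℤⁿ is an integrally convex set. -/
noncomputable section

def IsPolyhedron {n : ℕ} (P : Set (Fin n → ℝ)) : Prop :=
  ∃ (m : ℕ) (A : Fin m → Fin n → ℝ) (b : Fin m → ℝ),
    P = {x | ∀ j, ∑ i, A j i * x i ≤ b j}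

def IntBox {n : ℕ} (l u : Fin n → ℤ) : Set (Fin n → ℝ) :=
  {x | ∀ i, (l i : ℝ) ≤ x i ∧ x i ≤ (u i : ℝ)}

def IsIntegerPoly {n : ℕ} (P : Set (Fin n → ℝ)) : Prop :=
  P = convexHull ℝ (coeZR '' {z : Fin n → ℤ | coeZR z ∈ P})

def IsBoxInteger {n : ℕ} (P : Set (Fin n → ℝ)) : Prop :=
  ∀ l u : Fin n → ℤ, l ≤ u → IsIntegerPoly (P ∩ IntBox l u)

/-!
Integral convexity localises `conv S`: its intersection with an integer box is the hull of the
finitely many points of `S` in that box. Hence `conv S` is closed and box-integer.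

For polyhedrality, let `x ∉ conv S` and let `p` be the point of `conv S` nearest to `x`. By
integral convexity `p` is a convex combination of points of `S` adjacent to `p` on the face exposed
by `x - p`, so `x - p` lies in the dual cone of the differences of nearby points of `S`, integer
vectors in `[-2, 2]ⁿ`; every vector of that cone is normal to `conv S` at `p`, since a linear
function that is locally maximal on a convex set is maximal. By Weyl's theorem (Fourier–Motzkin
elimination) the cone is generated by finitely many vectors, one of which separates `x` from
`conv S`. As there are finitely many such cones, finitely many inequalities cut out `conv S`.

Conversely, a point `x` of `conv (P ∩ ℤⁿ)` lies in `P ∩ [⌊x⌋, ⌈x⌉]`, the hull of its integer points,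
all of which lie in `N(x)`.
-/

theorem sum_sum_smul_smul_sub_smul {R N : Type*} [CommRing R] [AddCommGroup N] [Module R N]
    (s t : Finset N) (w : N → R) (f : N →ₗ[R] R) :
    ∑ g ∈ s, ∑ h ∈ t, (w g * w h) • (f g • h - f h • g) =
      (∑ g ∈ s, w g * f g) • ∑ h ∈ t, w h • h + (∑ h ∈ t, w h * -f h) • ∑ g ∈ s, w g • g := by
  calc _ = ∑ g ∈ s, ∑ h ∈ t, ((w g * f g) • (w h • h) + (w h * -f h) • (w g • g)) :=
        Finset.sum_congr rfl fun g _ => Finset.sum_congr rfl fun h _ => by module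
    _ = _ := by simp only [Finset.sum_add_distrib, ← Finset.smul_sum, ← Finset.sum_smul]

namespace PointedCone

theorem exists_pos_of_mem_hull {R N : Type*} [Ring R] [LinearOrder R] [IsOrderedRing R]
    [AddCommGroup N] [Module R N] {s : Set N} {x : N} (hx : x ∈ hull R s) (f : N →ₗ[R] R)
    (hfx : 0 < f x) : ∃ y ∈ s, 0 < f y := by
  by_contra! h
  have hle : hull R s ≤ (positive R R).comap (-f) :=
    Submodule.span_le.2 fun y hy => by simpa using h y hy
  have := hle hx
  simp only [mem_comap, mem_positive, LinearMap.neg_apply, neg_nonneg] at this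
  exact this.not_gt hfx

variable {𝕜 M N : Type*} [Field 𝕜] [LinearOrder 𝕜] [IsStrictOrderedRing 𝕜]
  [AddCommGroup M] [Module 𝕜 M] [AddCommGroup N] [Module 𝕜 N]

open Finset

def fourierMotzkin [DecidableEq N] (G : Finset N) (f : N →ₗ[𝕜] 𝕜) : Finset N :=
  G.filter (0 ≤ f ·) ∪
    (G.filter (0 ≤ f ·) ×ˢ G.filter (f · < 0)).image fun q => f q.1 • q.2 - f q.2 • q.1

theorem hull_fourierMotzkin_le [DecidableEq N] (G : Finset N) (f : N →ₗ[𝕜] 𝕜) :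
    hull 𝕜 (fourierMotzkin G f : Set N) ≤ hull 𝕜 (G : Set N) ⊓ (positive 𝕜 𝕜).comap f := by
  rw [Submodule.span_le]
  intro x hx
  simp only [fourierMotzkin, coe_union, coe_image, coe_product, Set.mem_union, Set.mem_image,
    Set.mem_prod, Prod.exists, mem_coe, mem_filter] at hx
  rcases hx with ⟨hxG, hx⟩ | ⟨g, h, ⟨⟨hg, hfg⟩, ⟨hh, hfh⟩⟩, rfl⟩
  · exact ⟨Submodule.subset_span hxG, hx⟩
  · refine ⟨?_, by simp [mul_comm]⟩
    rw [sub_eq_add_neg, ← neg_smul]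
    exact add_mem (smul_mem _ hfg (Submodule.subset_span hh))
      (smul_mem _ (by linarith) (Submodule.subset_span hg))

theorem mem_hull_fourierMotzkin [DecidableEq N] {G : Finset N} {f : N →ₗ[𝕜] 𝕜} {x : N}
    (hx : x ∈ hull 𝕜 (G : Set N)) (hfx : 0 ≤ f x) : x ∈ hull 𝕜 (fourierMotzkin G f : Set N) := by
  obtain ⟨c, -, rfl⟩ := Submodule.mem_span_finset.1 hx
  set Gp := G.filter (0 ≤ f ·)
  set Gn := G.filter (f · < 0)
  set w : N → 𝕜 := fun a => c a
  have hw : ∀ a, 0 ≤ w a := fun a => (c a).2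
  set X := ∑ g ∈ Gp, w g • g
  set T := ∑ h ∈ Gn, w h • h
  set sP := ∑ g ∈ Gp, w g * f g
  set sN := ∑ h ∈ Gn, w h * -f h
  have hx : ∑ a ∈ G, c a • a = X + T := by
    simp only [X, T, Gp, Gn, ← not_le, sum_filter_add_sum_filter_not]; rfl
  rw [hx] at hfx ⊢
  have hsPN : sN ≤ sP := by
    simp only [map_add, map_sum, map_smul, smul_eq_mul, X, T] at hfx
    simp only [sP, sN, mul_neg, sum_neg_distrib]
    linarith
  have hsN : 0 ≤ sN := sum_nonneg fun h hh => mul_nonneg (hw h) (by simp [Gn] at hh; linarith)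
  have hX : X ∈ hull 𝕜 (fourierMotzkin G f : Set N) := sum_mem fun g hg =>
    smul_mem _ (hw g) (Submodule.subset_span (mem_coe.2 (mem_union_left _ hg)))
  have hpair : sP • T + sN • X ∈ hull 𝕜 (fourierMotzkin G f : Set N) :=
    sum_sum_smul_smul_sub_smul Gp Gn w f ▸ sum_mem fun g hg => sum_mem fun h hh =>
      smul_mem _ (mul_nonneg (hw g) (hw h)) (Submodule.subset_span (by
        simp only [fourierMotzkin, coe_union, coe_image, coe_product]
        exact .inr ⟨(g, h), ⟨hg, hh⟩, rfl⟩))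
  rcases (hsN.trans hsPN).eq_or_lt with hsP | hsP
  · have hT : T = 0 := sum_eq_zero fun h hh => by
      have := (sum_eq_zero_iff_of_nonneg fun h hh => mul_nonneg (hw h)
        (neg_nonneg.2 (mem_filter.1 hh).2.le)).1 (le_antisymm (hsPN.trans hsP.ge) hsN) h hh
      rw [show w h = 0 by simpa [(mem_filter.1 hh).2.ne] using this, zero_smul]
    rwa [hT, add_zero]
  · rw [← smul_mem_iff _ hsP, smul_add, show sP • X = (sP - sN) • X + sN • X by module,
      add_assoc, add_comm (sN • X)]
    exact add_mem (smul_mem _ (sub_nonneg.2 hsPN) hX) hpair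

theorem fg_inf_dual_singleton {p : M →ₗ[𝕜] N →ₗ[𝕜] 𝕜} {C : PointedCone 𝕜 N} (hC : C.FG)
    (m : M) : (C ⊓ dual p {m}).FG := by
  classical
  obtain ⟨G, rfl⟩ := hC
  refine ⟨fourierMotzkin G (p m), le_antisymm ?_ fun x hx => mem_hull_fourierMotzkin hx.1 ?_⟩
  · rw [dual_singleton]
    exact hull_fourierMotzkin_le G (p m)
  · simpa using hx.2

theorem fg_dual_finset [Module.Finite 𝕜 N] {p : M →ₗ[𝕜] N →ₗ[𝕜] 𝕜} (s : Finset M) :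
    (dual p (s : Set M)).FG := by
  classical
  induction s using Finset.induction_on with
  | empty => simpa using Module.finite_def.1 (inferInstance : Module.Finite {c : 𝕜 // 0 ≤ c} N)
  | insert m s _ ih =>
    rw [coe_insert, dual_insert, inf_comm]
    exact fg_inf_dual_singleton ih m

end PointedCone

theorem IsClosed.exists_forall_dotProduct_sub_nonpos {ι : Type*} [Fintype ι] {C : Set (ι → ℝ)}
    (hC : IsClosed C) (hconv : Convex ℝ C) (hne : C.Nonempty) (x : ι → ℝ) :
    ∃ p ∈ C, ∀ y ∈ C, (x - p) ⬝ᵥ (y - p) ≤ 0 := by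
  let e := EuclideanSpace.equiv ι ℝ
  have hK : Convex ℝ (e ⁻¹' C) := hconv.linear_preimage e.toLinearMap
  obtain ⟨p, hp, hmin⟩ := exists_norm_eq_iInf_of_complete_convex (hne.preimage e.surjective)
    (hC.preimage e.continuous).isComplete hK (e.symm x)
  refine ⟨e p, hp, fun y hy => ?_⟩
  have := (norm_eq_iInf_iff_real_inner_le_zero hK hp).1 hmin (e.symm y) (by simpa using hy)
  rw [EuclideanSpace.inner_eq_star_dotProduct] at this
  convert this using 1
  simp [e, dotProduct_comm]
  rfl

theorem mem_convexHull_inter_of_le {E : Type*} [AddCommGroup E] [Module ℝ E] {T : Set E}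
    {f : E →ₗ[ℝ] ℝ} {p : E} (hp : p ∈ convexHull ℝ T) (hT : ∀ y ∈ T, f y ≤ f p) :
    p ∈ convexHull ℝ (T ∩ {y | f y = f p}) := by
  set H := {y | f y = f p}
  have hlt : convexHull ℝ (T \ H) ⊆ {y | f y < f p} :=
    convexHull_min (fun y hy => (hT y hy.1).lt_of_ne hy.2) (convex_halfSpace_lt f.isLinear _)
  rcases (T ∩ H).eq_empty_or_nonempty with hTH | hTH
  · have hTH : T ⊆ T \ H := fun y hy => ⟨hy, fun hyH => hTH.subset ⟨hy, hyH⟩⟩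
    exact absurd (hlt (convexHull_mono hTH hp)) (lt_irrefl (f p))
  rcases (T \ H).eq_empty_or_nonempty with hTH' | hTH'
  · rwa [Set.inter_eq_left.2 (Set.sdiff_eq_empty.1 hTH')]
  -- `p` lies on a segment from `conv (T ∩ H)` to `conv (T \ H)`, where `f < f p`
  rw [← Set.inter_union_sdiff T H, convexHull_union hTH hTH', mem_convexJoin] at hp
  obtain ⟨a, ha, b, hb, s, t, hs, ht, hst, rfl⟩ := hp
  have hfa : f a = f (s • a + t • b) :=
    convexHull_min Set.inter_subset_right (convex_hyperplane f.isLinear _) ha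
  have hfb := hlt hb
  simp only [Set.mem_ofPred_eq, map_add, map_smul, smul_eq_mul] at hfa hfb
  rw [← hfa] at hfb
  have : t * (f a - f b) = 0 := by linear_combination hfa + f a * hst
  obtain rfl : t = 0 := (mul_eq_zero.1 this).resolve_right (sub_pos.2 hfb).ne'
  simpa [show s = 1 by linarith] using ha

theorem isPolyhedron_of_finset_separating {n : ℕ} {C : Set (Fin n → ℝ)} (hne : C.Nonempty)
    (N : Finset (Fin n → ℝ))
    (hN : ∀ x ∉ C, ∃ a ∈ N, ∃ b, (∀ y ∈ C, a ⬝ᵥ y ≤ b) ∧ b < a ⬝ᵥ x) : IsPolyhedron C := by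
  classical
  set N' := N.filter fun a => BddAbove ((a ⬝ᵥ ·) '' C)
  refine ⟨N'.card, fun j => N'.equivFin.symm j, fun j => sSup ((N'.equivFin.symm j ⬝ᵥ ·) '' C),
    Set.Subset.antisymm (fun x hx j => ?_) fun x hx => ?_⟩
  · exact le_csSup (Finset.mem_filter.1 (N'.equivFin.symm j).2).2 ⟨x, hx, rfl⟩
  · by_contra hxC
    obtain ⟨a, ha, b, hb, hbx⟩ := hN x hxC
    have hbound : ∀ r ∈ (a ⬝ᵥ ·) '' C, r ≤ b := by rintro _ ⟨y, hy, rfl⟩; exact hb y hy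
    have haN' : a ∈ N' := Finset.mem_filter.2 ⟨ha, b, hbound⟩
    have hax : a ⬝ᵥ x ≤ sSup ((a ⬝ᵥ ·) '' C) := by
      have := hx (N'.equivFin ⟨a, haN'⟩)
      simp only [Equiv.symm_apply_apply] at this
      exact this
    linarith [csSup_le (hne.image _) hbound]

theorem IsPolyhedron.convex {n : ℕ} {P : Set (Fin n → ℝ)} (hP : IsPolyhedron P) :
    Convex ℝ P := by
  obtain ⟨m, A, b, rfl⟩ := hP
  have := convex_iInter fun j => convex_halfSpace_le (dotProductBilin ℝ ℝ (A j)).isLinear (b j)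
  rwa [← Set.ofPred_forall] at this

section IntegerBoxes

variable {n : ℕ}

open Topology

theorem intBox_eq_pi (l u : Fin n → ℤ) :
    IntBox l u = Set.univ.pi fun i => Set.Icc (l i : ℝ) (u i) := by
  ext x
  simp only [IntBox, Set.mem_univ_pi, Set.mem_Icc, Set.mem_ofPred_eq]

theorem convex_intBox (l u : Fin n → ℤ) : Convex ℝ (IntBox l u) := by
  rw [intBox_eq_pi]
  exact convex_pi fun i _ => convex_Icc _ _

theorem intBox_mem_nhds {l u : Fin n → ℤ} {x : Fin n → ℝ} (h : ∀ i, (l i : ℝ) < x i ∧ x i < u i) :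
    IntBox l u ∈ 𝓝 x := by
  rw [intBox_eq_pi]
  exact set_pi_mem_nhds Set.finite_univ fun i _ => Icc_mem_nhds (h i).1 (h i).2

theorem coeZR_preimage_intBox (l u : Fin n → ℤ) : coeZR ⁻¹' IntBox l u = Set.Icc l u := by
  ext z
  simp [IntBox, coeZR, Pi.le_def, forall_and]

theorem intNbhd_coeZR (z : Fin n → ℤ) : IntNbhd (coeZR z) = {z} := by
  ext w
  simp only [IntNbhd, coeZR, Set.mem_ofPred_eq, Set.mem_singleton_iff, funext_iff]
  refine forall_congr' fun i => ?_
  rw [← Int.cast_sub, ← Int.cast_abs, ← Int.cast_one, Int.cast_lt, Int.abs_lt_one_iff, sub_eq_zero,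
    eq_comm]

theorem coeZR_mem_intBox_of_mem_intNbhd {l u : Fin n → ℤ} {x : Fin n → ℝ} {z : Fin n → ℤ}
    (hx : x ∈ IntBox l u) (hz : z ∈ IntNbhd x) : coeZR z ∈ IntBox l u := by
  intro i
  obtain ⟨h1, h2⟩ := abs_lt.1 (hz i)
  obtain ⟨hl, hu⟩ := hx i
  have hl' : (l i : ℝ) < z i + 1 := by linarith
  have hu' : (z i : ℝ) < u i + 1 := by linarith
  show (l i : ℝ) ≤ z i ∧ (z i : ℝ) ≤ u i
  exact ⟨mod_cast Int.lt_add_one_iff.1 (mod_cast hl'), mod_cast Int.lt_add_one_iff.1 (mod_cast hu')⟩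

abbrev nbhdBox (x : Fin n → ℝ) : Set (Fin n → ℝ) :=
  IntBox (fun i => ⌈x i⌉ - 1) (fun i => ⌊x i⌋ + 1)

theorem nbhdBox_mem_nhds (x : Fin n → ℝ) : nbhdBox x ∈ 𝓝 x :=
  intBox_mem_nhds fun i => by
    push_cast
    exact ⟨by linarith [Int.ceil_lt_add_one (x i)], Int.lt_floor_add_one (x i)⟩

theorem coeZR_mem_nbhdBox_of_mem_intNbhd {x : Fin n → ℝ} {z : Fin n → ℤ} (hz : z ∈ IntNbhd x) :
    coeZR z ∈ nbhdBox x :=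
  coeZR_mem_intBox_of_mem_intNbhd (mem_of_mem_nhds (nbhdBox_mem_nhds x)) hz

def intCube (n : ℕ) (r : ℤ) : Finset (Fin n → ℝ) :=
  (Fintype.piFinset fun _ => Finset.Icc (-r) r).image coeZR

theorem sub_mem_intCube_of_mem_nbhdBox {x : Fin n → ℝ} {z w : Fin n → ℤ}
    (hz : coeZR z ∈ nbhdBox x) (hw : coeZR w ∈ nbhdBox x) : coeZR w - coeZR z ∈ intCube n 2 := by
  rw [← Set.mem_preimage, coeZR_preimage_intBox] at hz hw
  refine Finset.mem_image.2 ⟨w - z, Fintype.mem_piFinset.2 fun i => ?_, by ext; simp [coeZR]⟩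
  have := Int.floor_le_ceil (x i)
  have := Int.ceil_le_floor_add_one (x i)
  have : ⌈x i⌉ - 1 ≤ z i ∧ z i ≤ ⌊x i⌋ + 1 := ⟨hz.1 i, hz.2 i⟩
  have : ⌈x i⌉ - 1 ≤ w i ∧ w i ≤ ⌊x i⌋ + 1 := ⟨hw.1 i, hw.2 i⟩
  simp only [Pi.sub_apply, Finset.mem_Icc]
  omega

end IntegerBoxes

namespace IntegrallyConvexSet

variable {n : ℕ} {S : Set (Fin n → ℤ)}

theorem convexHull_inter_intBox (hS : IntegrallyConvexSet S) (l u : Fin n → ℤ) :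
    convexHull ℝ (coeZR '' S) ∩ IntBox l u = convexHull ℝ (coeZR '' S ∩ IntBox l u) := by
  refine Set.Subset.antisymm ?_ (convexHull_min
    (Set.inter_subset_inter_left _ (subset_convexHull ℝ _))
    ((convex_convexHull ℝ _).inter (convex_intBox l u)))
  rintro x ⟨hxC, hxB⟩
  refine convexHull_mono ?_ (hS x hxC)
  rintro _ ⟨z, ⟨hzS, hzN⟩, rfl⟩
  exact ⟨⟨z, hzS, rfl⟩, coeZR_mem_intBox_of_mem_intNbhd hxB hzN⟩

theorem isCompact_convexHull_inter_intBox (hS : IntegrallyConvexSet S) (l u : Fin n → ℤ) :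
    IsCompact (convexHull ℝ (coeZR '' S) ∩ IntBox l u) := by
  rw [hS.convexHull_inter_intBox, ← Set.image_inter_preimage, coeZR_preimage_intBox]
  exact (((Set.finite_Icc l u).subset Set.inter_subset_right).image _).isCompact_convexHull (𝕜 := ℝ)

theorem mem_of_coeZR_mem_convexHull (hS : IntegrallyConvexSet S) {z : Fin n → ℤ}
    (hz : coeZR z ∈ convexHull ℝ (coeZR '' S)) : z ∈ S := by
  have := hS _ hz
  rw [intNbhd_coeZR] at this
  obtain ⟨_, w, ⟨hwS, rfl⟩, rfl⟩ := convexHull_nonempty_iff.1 ⟨_, this⟩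
  exact hwS

theorem isBoxInteger (hS : IntegrallyConvexSet S) : IsBoxInteger (convexHull ℝ (coeZR '' S)) := by
  intro l u _
  have hpts : {z | coeZR z ∈ convexHull ℝ (coeZR '' S) ∩ IntBox l u} = S ∩ coeZR ⁻¹' IntBox l u :=
    Set.ext fun z => ⟨fun h => ⟨hS.mem_of_coeZR_mem_convexHull h.1, h.2⟩,
      fun h => ⟨subset_convexHull ℝ _ ⟨z, h.1, rfl⟩, h.2⟩⟩
  rw [IsIntegerPoly, hpts, Set.image_inter_preimage, hS.convexHull_inter_intBox]

theorem isClosed_convexHull (hS : IntegrallyConvexSet S) :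
    IsClosed (convexHull ℝ (coeZR '' S)) := by
  refine isClosed_of_closure_subset fun x hx => ?_
  have hxB : x ∈ closure (convexHull ℝ (coeZR '' S) ∩ nbhdBox x) :=
    mem_closure_iff_nhds.2 fun t ht => by
      obtain ⟨y, ⟨hyt, hyB⟩, hyC⟩ :=
        mem_closure_iff_nhds.1 hx _ (Filter.inter_mem ht (nbhdBox_mem_nhds x))
      exact ⟨y, hyt, hyC, hyB⟩
  exact ((hS.isCompact_convexHull_inter_intBox _ _).isClosed.closure_subset hxB).1

open PointedCone in
theorem exists_intCube_normal_dual (hS : IntegrallyConvexSet S) {p v : Fin n → ℝ}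
    (hp : p ∈ convexHull ℝ (coeZR '' S)) (hv : ∀ y ∈ convexHull ℝ (coeZR '' S), v ⬝ᵥ y ≤ v ⬝ᵥ p) :
    ∃ M ⊆ intCube n 2, v ∈ dual (dotProductBilin ℝ ℝ) (M : Set (Fin n → ℝ)) ∧
      ∀ g ∈ dual (dotProductBilin ℝ ℝ) (M : Set (Fin n → ℝ)),
        ∀ y ∈ convexHull ℝ (coeZR '' S), g ⬝ᵥ y ≤ g ⬝ᵥ p := by
  classical
  set C := convexHull ℝ (coeZR '' S)
  set W := S ∩ IntNbhd p ∩ coeZR ⁻¹' {y | v ⬝ᵥ y = v ⬝ᵥ p}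
  have hpW : p ∈ convexHull ℝ (coeZR '' W) := by
    rw [Set.image_inter_preimage]
    refine mem_convexHull_inter_of_le (f := dotProductBilin ℝ ℝ v) (hS p hp) ?_
    rintro _ ⟨z, hz, rfl⟩
    exact hv _ (subset_convexHull ℝ _ ⟨z, hz.1, rfl⟩)
  set M := (intCube n 2).filter fun d =>
    ∃ w ∈ W, ∃ z ∈ S, coeZR z ∈ nbhdBox p ∧ d = coeZR w - coeZR z
  refine ⟨M, Finset.filter_subset _ _, ?_, fun g hg => ?_⟩
  · intro d hd
    obtain ⟨w, hw, z, hzS, -, rfl⟩ := (Finset.mem_filter.1 hd).2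
    have hvz := hv _ (subset_convexHull ℝ _ ⟨z, hzS, rfl⟩)
    have hvw : v ⬝ᵥ coeZR w = v ⬝ᵥ p := hw.2
    simp only [dotProductBilin_apply_apply, sub_dotProduct]
    linarith [dotProduct_comm v (coeZR w), dotProduct_comm v (coeZR z)]
  have hzw : ∀ z ∈ S, coeZR z ∈ nbhdBox p → ∀ w ∈ W, g ⬝ᵥ coeZR z ≤ g ⬝ᵥ coeZR w := by
    intro z hzS hzB w hw
    have hwB := coeZR_mem_nbhdBox_of_mem_intNbhd hw.1.2
    have := hg <| Finset.mem_filter.2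
      ⟨sub_mem_intCube_of_mem_nbhdBox hzB hwB, w, hw, z, hzS, hzB, rfl⟩
    simp only [dotProductBilin_apply_apply, sub_dotProduct] at this
    linarith [dotProduct_comm g (coeZR w), dotProduct_comm g (coeZR z)]
  have hloc : ∀ y ∈ C ∩ nbhdBox p, g ⬝ᵥ y ≤ g ⬝ᵥ p := by
    rw [hS.convexHull_inter_intBox]
    refine fun y hy => convexHull_min ?_ (convex_halfSpace_le (dotProductBilin ℝ ℝ g).isLinear _) hy
    rintro _ ⟨⟨z, hzS, rfl⟩, hzB⟩
    exact convexHull_min (by rintro _ ⟨w, hw, rfl⟩; exact hzw z hzS hzB w hw)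
      (convex_halfSpace_ge (dotProductBilin ℝ ℝ g).isLinear _) hpW
  exact IsMaxOn.of_isLocalMaxOn_of_concaveOn (f := dotProductBilin ℝ ℝ g) hp
    (Filter.mem_of_superset (inter_mem_nhdsWithin C (nbhdBox_mem_nhds p)) hloc)
    ((dotProductBilin ℝ ℝ g).concaveOn (convex_convexHull ℝ _))

theorem exists_finset_separating (hne : S.Nonempty) (hS : IntegrallyConvexSet S) :
    ∃ N : Finset (Fin n → ℝ), ∀ x ∉ convexHull ℝ (coeZR '' S), ∃ a ∈ N, ∃ b,
      (∀ y ∈ convexHull ℝ (coeZR '' S), a ⬝ᵥ y ≤ b) ∧ b < a ⬝ᵥ x := by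
  classical
  choose G hG using fun M : Finset (Fin n → ℝ) =>
    PointedCone.fg_dual_finset (p := dotProductBilin ℝ ℝ) M
  refine ⟨(intCube n 2).powerset.biUnion G, fun x hx => ?_⟩
  obtain ⟨p, hpC, hp⟩ := hS.isClosed_convexHull.exists_forall_dotProduct_sub_nonpos
    (convex_convexHull ℝ _) (hne.image coeZR).convexHull x
  have hv : ∀ y ∈ convexHull ℝ (coeZR '' S), (x - p) ⬝ᵥ y ≤ (x - p) ⬝ᵥ p := fun y hy => by
    simpa [dotProduct_sub] using hp y hy
  obtain ⟨M, hMcube, hvM, hM⟩ := hS.exists_intCube_normal_dual hpC hv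
  rw [← hG M] at hvM
  have hxp : 0 < (x - p) ⬝ᵥ (x - p) := by
    simpa using Matrix.dotProduct_self_star_pos_iff.2 (sub_ne_zero.2 fun h : x = p => hx (h ▸ hpC))
  obtain ⟨g, hgG, hg⟩ := PointedCone.exists_pos_of_mem_hull hvM
    ((dotProductBilin ℝ ℝ).flip (x - p)) (by simpa using hxp)
  refine ⟨g, Finset.mem_biUnion.2 ⟨M, Finset.mem_powerset.2 hMcube, hgG⟩, g ⬝ᵥ p,
    hM g (hG M ▸ PointedCone.subset_hull hgG), ?_⟩
  simpa [dotProduct_sub] using hg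

theorem isPolyhedron_convexHull (hne : S.Nonempty) (hS : IntegrallyConvexSet S) :
    IsPolyhedron (convexHull ℝ (coeZR '' S)) :=
  let ⟨N, hN⟩ := hS.exists_finset_separating hne
  isPolyhedron_of_finset_separating (hne.image coeZR).convexHull N hN

end IntegrallyConvexSet

theorem IsBoxInteger.integrallyConvexSet {n : ℕ} {P : Set (Fin n → ℝ)} (hconv : Convex ℝ P)
    (hbox : IsBoxInteger P) : IntegrallyConvexSet {z : Fin n → ℤ | coeZR z ∈ P} := by
  intro x hx
  have hxP : x ∈ P := convexHull_min (by rintro _ ⟨z, hz, rfl⟩; exact hz) hconv hx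
  have hxB : x ∈ P ∩ IntBox (fun i => ⌊x i⌋) (fun i => ⌈x i⌉) :=
    ⟨hxP, fun i => ⟨Int.floor_le _, Int.le_ceil _⟩⟩
  rw [hbox _ _ fun i => Int.floor_le_ceil (x i)] at hxB
  refine convexHull_mono (Set.image_mono ?_) hxB
  rintro z ⟨hzP, hzB⟩
  refine ⟨hzP, fun i => ?_⟩
  obtain ⟨hl, hu⟩ : (⌊x i⌋ : ℝ) ≤ z i ∧ (z i : ℝ) ≤ ⌈x i⌉ := hzB i
  exact abs_lt.2 ⟨by linarith [Int.ceil_lt_add_one (x i)], by linarith [Int.sub_one_lt_floor (x i)]⟩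

theorem stmt5 {n : ℕ} :
    (∀ S : Set (Fin n → ℤ), S.Nonempty → IntegrallyConvexSet S →
      IsPolyhedron (convexHull ℝ (coeZR '' S)) ∧ IsBoxInteger (convexHull ℝ (coeZR '' S))) ∧
    (∀ P : Set (Fin n → ℝ), IsPolyhedron P → IsBoxInteger P →
      IntegrallyConvexSet {z : Fin n → ℤ | coeZR z ∈ P}) := by
  exact ⟨fun _ hne hS => ⟨hS.isPolyhedron_convexHull hne, hS.isBoxInteger⟩,
    fun _ hpoly hbox => hbox.integrallyConvexSet hpoly.convex⟩
end
end

section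
/- Let S = {(1,1,0,0), (0,1,1,0), (1,0,1,0), (0,0,0,1)} ⊆ ℤ⁴ and let P be its convex hull. Then the 2-dilation 2P is not box-integer: the point (1,1,1,1/2) belongs to 2P, and (2P) ∩ [l,u] consists only of the point (1,1,1,1/2) for l = (1,1,1,0) and u = (1,1,1,1); in particular 2P ∩ [l,u] contains no integer point while being nonempty. -/
noncomputable section

def S6 : Set (Fin 4 → ℤ) := {![1,1,0,0], ![0,1,1,0], ![1,0,1,0], ![0,0,0,1]}

def P6 : Set (Fin 4 → ℝ) := convexHull ℝ (coeZR '' S6)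

/-- the 2-dilation of P6 -/
def P6d : Set (Fin 4 → ℝ) := {x | (2⁻¹ : ℝ) • x ∈ P6}

def v6 : Fin 4 → ℝ := ![1, 1, 1, 1/2]

def box6 : Set (Fin 4 → ℝ) :=
  {x | ∀ i, ((![1,1,1,0] : Fin 4 → ℤ) i : ℝ) ≤ x i ∧ x i ≤ ((![1,1,1,1] : Fin 4 → ℤ) i : ℝ)}

/-! Every vertex of `P6` satisfies `y₀ + y₁ + y₂ + 2 y₃ = 2`, so every point of `2 P6` satisfies
`x₀ + x₁ + x₂ + 2 x₃ = 4`. On the box the first three coordinates are `1`, which forces `x₃ = 1/2`;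
and `(1,1,1,1/2)` is twice the barycentre of the four vertices. -/

lemma P6_subset_hyperplane : P6 ⊆ {y | y 0 + y 1 + y 2 + 2 * y 3 = 2} := by
  refine convexHull_min ?_ (convex_hyperplane ⟨fun x y => ?_, fun c x => ?_⟩ _)
  · rintro y ⟨z, hz, rfl⟩
    simp only [S6, Set.mem_insert_iff, Set.mem_singleton_iff] at hz
    rcases hz with rfl | rfl | rfl | rfl <;> simp [coeZR] <;> norm_num
  · simp only [Pi.add_apply]; ring
  · simp only [Pi.smul_apply, smul_eq_mul]; ring

lemma P6d_subset_hyperplane : P6d ⊆ {x | x 0 + x 1 + x 2 + 2 * x 3 = 4} := by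
  intro x hx
  have h := P6_subset_hyperplane hx
  simp only [Set.mem_ofPred_eq, Pi.smul_apply, smul_eq_mul] at h ⊢
  linarith

lemma v6_mem_P6d : v6 ∈ P6d := by
  let vertex : Fin 4 → Fin 4 → ℤ := ![![1,1,0,0], ![0,1,1,0], ![1,0,1,0], ![0,0,0,1]]
  have barycentre : (2⁻¹ : ℝ) • v6 = ∑ i, (4⁻¹ : ℝ) • coeZR (vertex i) := by
    funext j
    fin_cases j <;> simp [vertex, v6, coeZR, Fin.sum_univ_four] <;> norm_num
  show (2⁻¹ : ℝ) • v6 ∈ P6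
  rw [barycentre]
  refine (convex_convexHull ℝ _).sum_mem (fun _ _ => by norm_num) (by norm_num) fun i _ => ?_
  exact subset_convexHull ℝ _ ⟨vertex i, by fin_cases i <;> simp [vertex, S6], rfl⟩

lemma P6d_inter_box6 : P6d ∩ box6 = {v6} := by
  refine Set.Subset.antisymm (fun x ⟨hx, hbox⟩ => ?_) ?_
  · have h := P6d_subset_hyperplane hx
    have h0 : x 0 = 1 := le_antisymm (by simpa using (hbox 0).2) (by simpa using (hbox 0).1)
    have h1 : x 1 = 1 := le_antisymm (by simpa using (hbox 1).2) (by simpa using (hbox 1).1)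
    have h2 : x 2 = 1 := le_antisymm (by simpa using (hbox 2).2) (by simpa using (hbox 2).1)
    have h3 : x 3 = 1 / 2 := by simp only [Set.mem_ofPred_eq] at h; linarith
    funext i
    fin_cases i <;> simp [v6, h0, h1, h2, h3]
  · rintro x rfl
    exact ⟨v6_mem_P6d, fun i => by fin_cases i <;> norm_num [v6]⟩

theorem stmt6 :
    v6 ∈ P6d ∧ P6d ∩ box6 = {v6} ∧ (P6d ∩ box6).Nonempty ∧
      ∀ z : Fin 4 → ℤ, coeZR z ∉ P6d ∩ box6 := by
  refine ⟨v6_mem_P6d, P6d_inter_box6, P6d_inter_box6 ▸ Set.singleton_nonempty v6, fun z hz => ?_⟩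
  rw [P6d_inter_box6] at hz
  have h3 : (z 3 : ℝ) = 1 / 2 := by simpa [coeZR, v6] using congrFun hz 3
  have hodd : 2 * z 3 = 1 := by exact_mod_cast (by linarith : (2 * z 3 : ℝ) = 1)
  omega
end
end

section
/- The Minkowski sum of two integrally convex sets need not be hole-free: for S₁ = {(0,0), (1,1)} and S₂ = {(1,0), (0,1)} in ℤ², the point (1,1) belongs to the convex hull of S₁ + S₂ but not to S₁ + S₂ itself. -/
noncomputable section

def S91 : Set (Fin 2 → ℤ) := {![0,0], ![1,1]}

def S92 : Set (Fin 2 → ℤ) := {![1,0], ![0,1]}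

open AffineMap

/- The point at parameter `t` of the segment from `a` to `b` is at distance `t * |b i - a i| < 1`
from `a` as long as `t < 1`, so a segment between integer points at ℓ∞-distance at most 1 lies
in the hull of the endpoints near each of its points. -/

lemma mem_intNbhd_lineMap_left {n : ℕ} {a b : Fin n → ℤ} (hab : ∀ i, |a i - b i| ≤ 1)
    {t : ℝ} (ht₀ : 0 ≤ t) (ht₁ : t < 1) : a ∈ IntNbhd (lineMap (coeZR a) (coeZR b) t) := by
  intro i
  have hdist : |(b i : ℝ) - a i| ≤ 1 := by
    rw [abs_sub_comm]; exact_mod_cast hab i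
  have hx : lineMap (coeZR a) (coeZR b) t i - a i = t * ((b i : ℝ) - a i) := by
    simp only [lineMap_apply_module, coeZR, Pi.add_apply, Pi.smul_apply, smul_eq_mul]; ring
  calc |lineMap (coeZR a) (coeZR b) t i - a i| = t * |(b i : ℝ) - a i| := by
        rw [hx, abs_mul, abs_of_nonneg ht₀]
    _ ≤ t * 1 := mul_le_mul_of_nonneg_left hdist ht₀
    _ < 1 := by linarith

lemma mem_intNbhd_lineMap_right {n : ℕ} {a b : Fin n → ℤ} (hab : ∀ i, |a i - b i| ≤ 1)
    {t : ℝ} (ht₀ : 0 < t) (ht₁ : t ≤ 1) : b ∈ IntNbhd (lineMap (coeZR a) (coeZR b) t) := by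
  rw [← sub_sub_cancel 1 t, lineMap_apply_one_sub]
  exact mem_intNbhd_lineMap_left (fun i => abs_sub_comm (a i) (b i) ▸ hab i)
    (by linarith) (by linarith)

theorem integrallyConvexSet_pair {n : ℕ} {a b : Fin n → ℤ} (hab : ∀ i, |a i - b i| ≤ 1) :
    IntegrallyConvexSet {a, b} := by
  intro x hx
  rw [Set.image_pair, convexHull_pair, segment_eq_image_lineMap] at hx
  obtain ⟨t, ⟨ht₀, ht₁⟩, rfl⟩ := hx
  rcases ht₀.eq_or_lt with rfl | ht₀
  · rw [lineMap_apply_zero]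
    refine subset_convexHull ℝ _ (Set.mem_image_of_mem _ ⟨Or.inl rfl, ?_⟩)
    simpa using mem_intNbhd_lineMap_left (b := b) hab le_rfl zero_lt_one
  rcases ht₁.eq_or_lt with rfl | ht₁
  · rw [lineMap_apply_one]
    refine subset_convexHull ℝ _ (Set.mem_image_of_mem _ ⟨Or.inr rfl, ?_⟩)
    simpa using mem_intNbhd_lineMap_right (a := a) hab zero_lt_one le_rfl
  have hpair : ({a, b} : Set (Fin n → ℤ)) ⊆
      {a, b} ∩ IntNbhd (lineMap (coeZR a) (coeZR b) t) :=
    Set.insert_subset ⟨Or.inl rfl, mem_intNbhd_lineMap_left hab ht₀.le ht₁⟩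
      (Set.singleton_subset_iff.2 ⟨Or.inr rfl, mem_intNbhd_lineMap_right hab ht₀ ht₁.le⟩)
  refine convexHull_mono (Set.image_mono hpair) ?_
  rw [Set.image_pair, convexHull_pair, segment_eq_image_lineMap]
  exact ⟨t, ⟨ht₀.le, ht₁.le⟩, rfl⟩

theorem stmt9 :
    IntegrallyConvexSet S91 ∧ IntegrallyConvexSet S92 ∧
    coeZR (![1,1] : Fin 2 → ℤ) ∈ convexHull ℝ (coeZR '' Set.image2 (· + ·) S91 S92) ∧
    (![1,1] : Fin 2 → ℤ) ∉ Set.image2 (· + ·) S91 S92 := by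
  refine ⟨integrallyConvexSet_pair (by decide), integrallyConvexSet_pair (by decide), ?_, ?_⟩
  · -- (1,1) is the midpoint of (0,0) + (1,0) and (1,1) + (0,1)
    have hmid : coeZR (![1,1] : Fin 2 → ℤ) =
        midpoint ℝ (coeZR (![0,0] + ![1,0])) (coeZR (![1,1] + ![0,1])) := by
      funext i; fin_cases i <;> norm_num [midpoint_eq_smul_add, coeZR]
    rw [hmid]
    refine segment_subset_convexHull ?_ ?_ (midpoint_mem_segment _ _) <;>
      exact Set.mem_image_of_mem _ (Set.mem_image2_of_mem (by simp [S91]) (by simp [S92]))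
  · rintro ⟨a, ha | ha, b, hb | hb, hsum⟩ <;> subst ha hb <;>
      simp [funext_iff, Fin.forall_fin_two] at hsum
end
end

section
/- Let f: ℤⁿ → ℝ ∪ {+∞} have an integrally convex effective domain. Then f is integrally convex if and only if the local convex extension satisfies f̃((x+y)/2) ≤ (f(x) + f(y))/2 for every x, y ∈ dom f with ‖x − y‖_∞ = 2. -/
noncomputable section

def localConvexExt {n : ℕ} (f : (Fin n → ℤ) → EReal) (x : Fin n → ℝ) : EReal :=
  sInf { v : EReal | ∃ l : (Fin n → ℤ) →₀ ℝ,
    (∀ z, 0 ≤ l z) ∧ (∀ z ∈ l.support, z ∈ IntNbhd x) ∧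
    (l.sum fun _ a => a) = 1 ∧
    (l.sum fun z a => a • coeZR z) = x ∧
    v = l.sum fun z a => (a : EReal) * f z }

def ERealConvexOn {n : ℕ} (g : (Fin n → ℝ) → EReal) : Prop :=
  ∀ x y : Fin n → ℝ, ∀ a b : ℝ, 0 ≤ a → 0 ≤ b → a + b = 1 →
    g (a • x + b • y) ≤ (a : EReal) * g x + (b : EReal) * g y

def IntegrallyConvexFn {n : ℕ} (f : (Fin n → ℤ) → EReal) : Prop :=
  ERealConvexOn (localConvexExt f)

/-!
`f̃ ≤ f` on `ℤⁿ`, so convexity of `f̃` at midpoints gives the forward direction.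

Conversely, by integral convexity of `dom f`, `f̃` is finite exactly on `conv (dom f)`. The key
claim is that `f̃(x) ≤ Σ λ_z f(z)` for every convex combination `λ` with barycentre `x` of points
of `dom f` inside a box of side `2`. If some coordinate `i₀` has support points `z, w` on both
faces of the box, the hypothesis lets us move mass from `z, w` to a nearly optimal local
combination at their midpoint, whose points lie in the middle layer of `i₀`; this removes `z` or
`w` and adds no point off that layer. Otherwise the box can be narrowed, and once all sides are at
most `1` the combination is local. Mixing nearly optimal combinations at two points at
`ℓ∞`-distance `≤ 1/2` yields such a combination, so `f̃` is convex on short segments, hence convex.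
-/

variable {n : ℕ}

section ConvexCombination

def mass : ((Fin n → ℤ) →₀ ℝ) →ₗ[ℝ] ℝ := Finsupp.linearCombination ℝ fun _ => 1

/-- Meaningful only for combinations supported in `dom f`, since `(⊤ : EReal).toReal = 0`. -/
def realCost (f : (Fin n → ℤ) → EReal) : ((Fin n → ℤ) →₀ ℝ) →ₗ[ℝ] ℝ :=
  Finsupp.linearCombination ℝ fun z => (f z).toReal

structure IsConvexComb (x : Fin n → ℝ) (l : (Fin n → ℤ) →₀ ℝ) : Prop where
  nonneg : ∀ z, 0 ≤ l z
  mass_eq : mass l = 1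
  linearCombination_eq : Finsupp.linearCombination ℝ coeZR l = x

lemma mass_apply (l : (Fin n → ℤ) →₀ ℝ) : mass l = l.sum fun _ a => a := by
  simp [mass, Finsupp.linearCombination_apply]

@[simp] lemma mass_single (z : Fin n → ℤ) (a : ℝ) : mass (Finsupp.single z a) = a := by
  simp [mass]

@[simp] lemma realCost_single (f : (Fin n → ℤ) → EReal) (z : Fin n → ℤ) (a : ℝ) :
    realCost f (Finsupp.single z a) = a * (f z).toReal := by
  simp [realCost]

lemma realCost_apply (f : (Fin n → ℤ) → EReal) (l : (Fin n → ℤ) →₀ ℝ) :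
    realCost f l = ∑ z ∈ l.support, l z * (f z).toReal := by
  simp [realCost, Finsupp.linearCombination_apply, Finsupp.sum]

lemma midpoint_apply (z w : Fin n → ℤ) (i : Fin n) :
    ((2⁻¹ : ℝ) • (coeZR z + coeZR w)) i = ((z i : ℝ) + w i) / 2 := by
  simp only [Pi.smul_apply, Pi.add_apply, coeZR, smul_eq_mul]
  ring

namespace IsConvexComb

variable {x : Fin n → ℝ} {l : (Fin n → ℤ) →₀ ℝ}

lemma single (z : Fin n → ℤ) : IsConvexComb (coeZR z) (Finsupp.single z 1) where
  nonneg w := by by_cases h : z = w <;> simp [h]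
  mass_eq := by simp
  linearCombination_eq := by simp

lemma sum_eq_one (hl : IsConvexComb x l) : ∑ z ∈ l.support, l z = 1 := by
  rw [← hl.mass_eq, mass_apply, Finsupp.sum]

lemma sum_mul_apply (hl : IsConvexComb x l) (i : Fin n) :
    ∑ z ∈ l.support, l z * (z i : ℝ) = x i := by
  rw [← hl.linearCombination_eq, Finsupp.linearCombination_apply, Finsupp.sum, Finset.sum_apply]
  rfl

lemma pos_of_mem_support (hl : IsConvexComb x l) {z : Fin n → ℤ} (hz : z ∈ l.support) :
    0 < l z :=
  (hl.nonneg z).lt_of_ne' (Finsupp.mem_support_iff.1 hz)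

lemma mix {y : Fin n → ℝ} {l₁ l₂ : (Fin n → ℤ) →₀ ℝ} (h₁ : IsConvexComb x l₁)
    (h₂ : IsConvexComb y l₂) {a b : ℝ} (ha : 0 ≤ a) (hb : 0 ≤ b) (hab : a + b = 1) :
    IsConvexComb (a • x + b • y) (a • l₁ + b • l₂) where
  nonneg z := by
    simpa using add_nonneg (mul_nonneg ha (h₁.nonneg z)) (mul_nonneg hb (h₂.nonneg z))
  mass_eq := by simp [h₁.mass_eq, h₂.mass_eq, hab]
  linearCombination_eq := by simp [h₁.linearCombination_eq, h₂.linearCombination_eq]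

lemma exchange {ρ : (Fin n → ℤ) →₀ ℝ} {z w : Fin n → ℤ} {t : ℝ} (hl : IsConvexComb x l)
    (hρ : IsConvexComb ((2⁻¹ : ℝ) • (coeZR z + coeZR w)) ρ) (hzw : z ≠ w) (ht : 0 ≤ t)
    (htz : t ≤ l z) (htw : t ≤ l w) :
    IsConvexComb x (l - t • (Finsupp.single z 1 + Finsupp.single w 1) + (2 * t) • ρ) where
  nonneg p := by
    have hρp := mul_nonneg (mul_nonneg zero_le_two ht) (hρ.nonneg p)
    have hsingle : t * (Finsupp.single z 1 p + Finsupp.single w 1 p) ≤ l p := by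
      rcases eq_or_ne z p with rfl | hz
      · simpa [hzw.symm] using htz
      rcases eq_or_ne w p with rfl | hw
      · simpa [hzw] using htw
      · simpa [hz, hw] using hl.nonneg p
    simp only [Finsupp.coe_add, Finsupp.coe_sub, Finsupp.coe_smul, Pi.add_apply, Pi.sub_apply,
      Pi.smul_apply, smul_eq_mul]
    linarith
  mass_eq := by
    simp only [map_add, map_sub, map_smul, hl.mass_eq, hρ.mass_eq, mass_single, smul_eq_mul]
    ring
  linearCombination_eq := by
    simp only [map_add, map_sub, map_smul, hl.linearCombination_eq, hρ.linearCombination_eq,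
      Finsupp.linearCombination_single, one_smul]
    module

lemma mem_convexHull {S : Set (Fin n → ℤ)} (hl : IsConvexComb x l)
    (hS : ∀ z ∈ l.support, z ∈ S) : x ∈ convexHull ℝ (coeZR '' S) := by
  have hx : l.support.centerMass l coeZR = x := by
    rw [Finset.centerMass, hl.sum_eq_one, inv_one, one_smul, ← hl.linearCombination_eq,
      Finsupp.linearCombination_apply, Finsupp.sum]
  rw [← hx]
  exact l.support.centerMass_mem_convexHull (fun z _ => hl.nonneg z)
    (by rw [hl.sum_eq_one]; exact one_pos) fun z hz => Set.mem_image_of_mem _ (hS z hz)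

end IsConvexComb

lemma exists_isConvexComb_of_mem_convexHull {x : Fin n → ℝ} {S : Set (Fin n → ℤ)}
    (hx : x ∈ convexHull ℝ (coeZR '' S)) :
    ∃ l, IsConvexComb x l ∧ ∀ z ∈ l.support, z ∈ S := by
  set T := {l : (Fin n → ℤ) →₀ ℝ | (∀ z, 0 ≤ l z) ∧ mass l = 1 ∧ ∀ z ∉ S, l z = 0}
  have hT : Convex ℝ T := by
    rintro l₁ ⟨h₁, m₁, s₁⟩ l₂ ⟨h₂, m₂, s₂⟩ a b ha hb hab
    refine ⟨fun z => ?_, by simp [m₁, m₂, hab], fun z hz => by simp [s₁ z hz, s₂ z hz]⟩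
    simpa using add_nonneg (mul_nonneg ha (h₁ z)) (mul_nonneg hb (h₂ z))
  have hsingle : (fun z => Finsupp.single z (1 : ℝ)) '' S ⊆ T := by
    rintro _ ⟨z, hz, rfl⟩
    exact ⟨(IsConvexComb.single z).nonneg, by simp, fun w hw => by
      simp [show z ≠ w from fun h => hw (h ▸ hz)]⟩
  have himage : coeZR '' S =
      Finsupp.linearCombination ℝ coeZR '' ((fun z => Finsupp.single z (1 : ℝ)) '' S) := by
    rw [Set.image_image]
    simp
  rw [himage, ← LinearMap.image_convexHull] at hx
  obtain ⟨l, hl, rfl⟩ := hx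
  obtain ⟨h0, hmass, hS⟩ := convexHull_min hsingle hT hl
  exact ⟨l, ⟨h0, hmass, rfl⟩, fun z hz => by_contra fun h =>
    Finsupp.mem_support_iff.1 hz (hS z h)⟩

end ConvexCombination

section Neighbourhood

variable {x : Fin n → ℝ} {z : Fin n → ℤ}

lemma mem_Icc_ceil_of_abs_sub_lt {r : ℝ} {k : ℤ} (hr : 2 * r ≤ k + 1)
    (hz : ∀ i, |(z i : ℝ) - x i| < r) :
    z ∈ Set.Icc (fun i => ⌈x i - r⌉) (fun i => ⌈x i - r⌉ + k) := by
  refine ⟨fun i => Int.ceil_le.2 (by linarith [(abs_lt.1 (hz i)).1]), fun i => ?_⟩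
  have hlt : (z i : ℝ) < ⌈x i - r⌉ + k + 1 := by
    linarith [(abs_lt.1 (hz i)).2, Int.le_ceil (x i - r)]
  exact Int.le_of_lt_add_one (by exact_mod_cast hlt)

lemma IntNbhd_finite (x : Fin n → ℝ) : (IntNbhd x).Finite :=
  (Set.finite_Icc _ _).subset fun z hz =>
    mem_Icc_ceil_of_abs_sub_lt (r := 1) (k := 1) (by norm_num) fun i => by
      rw [abs_sub_comm]
      exact hz i

lemma mem_Icc_of_mem_IntNbhd {lo hi : Fin n → ℤ} (hx : ∀ i, (lo i : ℝ) ≤ x i ∧ x i ≤ hi i)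
    (hz : z ∈ IntNbhd x) : z ∈ Set.Icc lo hi := by
  refine ⟨fun i => ?_, fun i => ?_⟩ <;> have h := abs_lt.1 (hz i) <;> have := hx i
  · have : (lo i : ℝ) - 1 < z i := by linarith
    exact Int.le_of_sub_one_lt (by exact_mod_cast this)
  · have : (z i : ℝ) < hi i + 1 := by linarith
    exact Int.le_of_lt_add_one (by exact_mod_cast this)

lemma apply_eq_of_mem_IntNbhd {i : Fin n} {c : ℤ} (hx : x i = c) (hz : z ∈ IntNbhd x) :
    z i = c := by
  have h := abs_lt.1 (hz i)
  rw [hx] at h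
  have h₁ : (c : ℝ) - 1 < z i := by linarith
  have h₂ : (z i : ℝ) < c + 1 := by linarith
  have : c - 1 < z i := by exact_mod_cast h₁
  have : z i < c + 1 := by exact_mod_cast h₂
  omega

lemma abs_sub_le_of_mem_Icc {lo hi z w : Fin n → ℤ} (hz : z ∈ Set.Icc lo hi)
    (hw : w ∈ Set.Icc lo hi) {i : Fin n} {k : ℤ} (hk : hi i ≤ lo i + k) : |z i - w i| ≤ k := by
  have : lo i ≤ z i := hz.1 i
  have : z i ≤ hi i := hz.2 i
  have : lo i ≤ w i := hw.1 i
  have : w i ≤ hi i := hw.2 i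
  rw [abs_le]
  constructor <;> omega

lemma midpoint_mem_Icc {lo hi z w : Fin n → ℤ} (hz : z ∈ Set.Icc lo hi)
    (hw : w ∈ Set.Icc lo hi) (i : Fin n) :
    (lo i : ℝ) ≤ ((2⁻¹ : ℝ) • (coeZR z + coeZR w)) i ∧
      ((2⁻¹ : ℝ) • (coeZR z + coeZR w)) i ≤ hi i := by
  have : (lo i : ℝ) ≤ z i := by exact_mod_cast hz.1 i
  have : (z i : ℝ) ≤ hi i := by exact_mod_cast hz.2 i
  have : (lo i : ℝ) ≤ w i := by exact_mod_cast hw.1 i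
  have : (w i : ℝ) ≤ hi i := by exact_mod_cast hw.2 i
  rw [midpoint_apply]
  constructor <;> linarith

lemma not_mem_IntNbhd_midpoint {z w : Fin n → ℤ} {i : Fin n} (h : |z i - w i| = 2) :
    z ∉ IntNbhd ((2⁻¹ : ℝ) • (coeZR z + coeZR w)) := fun hz => by
  have h' : |(z i : ℝ) - w i| = 2 := by exact_mod_cast h
  have := hz i
  rw [midpoint_apply, show ((z i : ℝ) + w i) / 2 - z i = -((z i - w i) / 2) by ring, abs_neg,
    abs_div, h', abs_two, div_self two_ne_zero] at this
  exact lt_irrefl _ this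

lemma IsConvexComb.abs_sub_lt_one {l : (Fin n → ℤ) →₀ ℝ} (hl : IsConvexComb x l)
    (hclose : ∀ w ∈ l.support, ∀ i, |(w i : ℝ) - z i| ≤ 1) (hz : z ∈ l.support) (i : Fin n) :
    |x i - z i| < 1 := by
  have hx : x i - z i = ∑ w ∈ l.support, l w * ((w i : ℝ) - z i) := by
    simp only [mul_sub, Finset.sum_sub_distrib, ← Finset.sum_mul, hl.sum_eq_one,
      hl.sum_mul_apply, one_mul]
  calc |x i - z i| ≤ ∑ w ∈ l.support, l w * |(w i : ℝ) - z i| := by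
        rw [hx]
        refine (Finset.abs_sum_le_sum_abs _ _).trans_eq (Finset.sum_congr rfl fun w _ => ?_)
        rw [abs_mul, abs_of_nonneg (hl.nonneg w)]
    _ = ∑ w ∈ l.support.erase z, l w * |(w i : ℝ) - z i| := (Finset.sum_erase _ (by simp)).symm
    _ ≤ ∑ w ∈ l.support.erase z, l w := Finset.sum_le_sum fun w hw =>
        mul_le_of_le_one_right (hl.nonneg w) (hclose w (Finset.mem_of_mem_erase hw) i)
    _ < 1 := by
        rw [Finset.sum_erase_eq_sub hz, hl.sum_eq_one]
        linarith [hl.pos_of_mem_support hz]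

lemma IsConvexComb.mem_IntNbhd {l : (Fin n → ℤ) →₀ ℝ} (hl : IsConvexComb x l)
    (hclose : ∀ w ∈ l.support, ∀ z ∈ l.support, ∀ i, |w i - z i| ≤ 1) (hz : z ∈ l.support) :
    z ∈ IntNbhd x := fun i =>
  hl.abs_sub_lt_one (fun w hw i => by exact_mod_cast hclose w hw z hz i) hz i

end Neighbourhood

section Cost

lemma EReal.coe_finset_sum {ι : Type*} (s : Finset ι) (g : ι → ℝ) :
    ((∑ i ∈ s, g i : ℝ) : EReal) = ∑ i ∈ s, (g i : EReal) :=
  map_sum (⟨⟨(↑), EReal.coe_zero⟩, EReal.coe_add⟩ : ℝ →+ EReal) g s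

lemma EReal.coe_mul_toReal_le {a : ℝ} (ha : 0 ≤ a) {b : EReal} (hb : b ≠ ⊥) :
    ((a * b.toReal : ℝ) : EReal) ≤ a * b := by
  induction b using EReal.rec with
  | bot => exact absurd rfl hb
  | coe b => simp
  | top => rcases ha.eq_or_lt with rfl | ha <;> simp [EReal.coe_mul_top_of_pos, *]

lemma EReal.coe_sum_mul_toReal_le {ι : Type*} (s : Finset ι) {a : ι → ℝ} {b : ι → EReal}
    (ha : ∀ i ∈ s, 0 ≤ a i) (hb : ∀ i ∈ s, b i ≠ ⊥) :
    ((∑ i ∈ s, a i * (b i).toReal : ℝ) : EReal) ≤ ∑ i ∈ s, (a i : EReal) * b i := by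
  rw [EReal.coe_finset_sum]
  exact Finset.sum_le_sum fun i hi => EReal.coe_mul_toReal_le (ha i hi) (hb i hi)

variable {f : (Fin n → ℤ) → EReal} {x : Fin n → ℝ} {l : (Fin n → ℤ) →₀ ℝ}

lemma coe_realCost_le_sum (hbot : ∀ z, f z ≠ ⊥) (hl : ∀ z, 0 ≤ l z) :
    (realCost f l : EReal) ≤ l.sum fun z a => (a : EReal) * f z := by
  rw [realCost_apply]
  exact EReal.coe_sum_mul_toReal_le _ (fun z _ => hl z) fun z _ => hbot z

lemma sum_mul_eq_coe_realCost (hbot : ∀ z, f z ≠ ⊥) (hdom : ∀ z ∈ l.support, f z ≠ ⊤) :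
    (l.sum fun z a => (a : EReal) * f z) = realCost f l := by
  rw [realCost_apply, EReal.coe_finset_sum, Finsupp.sum]
  refine Finset.sum_congr rfl fun z hz => ?_
  rw [EReal.coe_mul, EReal.coe_toReal (hdom z hz) (hbot z)]

lemma sum_mul_eq_top (hbot : ∀ z, f z ≠ ⊥) (hl : ∀ z, 0 ≤ l z) {z : Fin n → ℤ}
    (hz : z ∈ l.support) (htop : f z = ⊤) : (l.sum fun z a => (a : EReal) * f z) = ⊤ := by
  have hrest : ∑ w ∈ l.support.erase z, (l w : EReal) * f w ≠ ⊥ :=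
    ne_bot_of_le_ne_bot (EReal.coe_ne_bot _)
      (EReal.coe_sum_mul_toReal_le _ (fun w _ => hl w) fun w _ => hbot w)
  rw [Finsupp.sum, ← Finset.add_sum_erase _ _ hz, htop,
    EReal.coe_mul_top_of_pos ((hl z).lt_of_ne' (Finsupp.mem_support_iff.1 hz)),
    EReal.top_add_of_ne_bot hrest]

lemma localConvexExt_le_realCost (hbot : ∀ z, f z ≠ ⊥) (hl : IsConvexComb x l)
    (hloc : ∀ z ∈ l.support, z ∈ IntNbhd x) (hdom : ∀ z ∈ l.support, f z ≠ ⊤) :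
    localConvexExt f x ≤ realCost f l := by
  refine sInf_le ⟨l, hl.nonneg, hloc, ?_, hl.linearCombination_eq, ?_⟩
  · rw [← mass_apply, hl.mass_eq]
  · rw [sum_mul_eq_coe_realCost hbot hdom]

lemma exists_realCost_lt_of_localConvexExt_lt (hbot : ∀ z, f z ≠ ⊥) {v : ℝ}
    (h : localConvexExt f x < v) :
    ∃ l, IsConvexComb x l ∧ (∀ z ∈ l.support, z ∈ IntNbhd x ∧ f z ≠ ⊤) ∧ realCost f l < v := by
  obtain ⟨_, ⟨l, h0, hloc, hmass, hbary, rfl⟩, hlt⟩ := sInf_lt_iff.1 h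
  have hdom : ∀ z ∈ l.support, f z ≠ ⊤ := fun z hz htop => by
    rw [sum_mul_eq_top hbot h0 hz htop] at hlt
    exact not_top_lt hlt
  refine ⟨l, ⟨h0, by rwa [mass_apply], hbary⟩, fun z hz => ⟨hloc z hz, hdom z hz⟩, ?_⟩
  rwa [sum_mul_eq_coe_realCost hbot hdom, EReal.coe_lt_coe_iff] at hlt

lemma localConvexExt_coeZR_le (f : (Fin n → ℤ) → EReal) (z : Fin n → ℤ) :
    localConvexExt f (coeZR z) ≤ f z := by
  refine sInf_le ⟨Finsupp.single z 1, (IsConvexComb.single z).nonneg, ?_, by simp, by simp, ?_⟩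
  · intro w hw i
    rw [Finset.mem_singleton.1 (Finsupp.support_single_subset hw)]
    simp [coeZR]
  · rw [Finsupp.sum_single_index] <;> simp

lemma localConvexExt_ne_bot (hbot : ∀ z, f z ≠ ⊥) (x : Fin n → ℝ) : localConvexExt f x ≠ ⊥ := by
  obtain ⟨c, hc⟩ := ((IntNbhd_finite x).image fun z => (f z).toReal).bddBelow
  refine ne_bot_of_le_ne_bot (EReal.coe_ne_bot c) (le_sInf ?_)
  rintro _ ⟨l, h0, hloc, hmass, -, rfl⟩
  have hmass' : ∑ z ∈ l.support, l z = 1 := by rw [← hmass, Finsupp.sum]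
  refine le_trans ?_ (coe_realCost_le_sum hbot h0)
  rw [EReal.coe_le_coe_iff, realCost_apply]
  calc c = ∑ z ∈ l.support, l z * c := by rw [← Finset.sum_mul, hmass', one_mul]
    _ ≤ _ := Finset.sum_le_sum fun z hz =>
        mul_le_mul_of_nonneg_left (hc ⟨z, hloc z hz, rfl⟩) (h0 z)

lemma mem_convexHull_of_localConvexExt_ne_top (hbot : ∀ z, f z ≠ ⊥)
    (h : localConvexExt f x ≠ ⊤) : x ∈ convexHull ℝ (coeZR '' {z | f z ≠ ⊤}) := by
  obtain ⟨v, hv, -⟩ := EReal.lt_iff_exists_real_btwn.1 (lt_top_iff_ne_top.2 h)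
  obtain ⟨l, hl, hs, -⟩ := exists_realCost_lt_of_localConvexExt_lt hbot hv
  exact hl.mem_convexHull fun z hz => (hs z hz).2

lemma localConvexExt_ne_top_of_mem_convexHull (hbot : ∀ z, f z ≠ ⊥)
    (hdom : IntegrallyConvexSet {z | f z ≠ ⊤})
    (hx : x ∈ convexHull ℝ (coeZR '' {z | f z ≠ ⊤})) : localConvexExt f x ≠ ⊤ := by
  obtain ⟨l, hl, hs⟩ := exists_isConvexComb_of_mem_convexHull (hdom x hx)
  exact ne_top_of_le_ne_top (EReal.coe_ne_top _)
    (localConvexExt_le_realCost hbot hl (fun z hz => (hs z hz).2) fun z hz => (hs z hz).1)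

end Cost

section Reduction

lemma exists_Icc_narrow {S : Finset (Fin n → ℤ)} {lo hi : Fin n → ℤ} {i₀ : Fin n}
    (hS : ∀ z ∈ S, z ∈ Set.Icc lo hi) (hi₀ : hi i₀ = lo i₀ + 2)
    (h : (∀ z ∈ S, z i₀ ≠ lo i₀) ∨ ∀ z ∈ S, z i₀ ≠ hi i₀) :
    ∃ lo' hi', lo ≤ lo' ∧ hi' ≤ hi ∧ hi' i₀ < lo' i₀ + 2 ∧ ∀ z ∈ S, z ∈ Set.Icc lo' hi' := by
  rcases h with h | h
  · refine ⟨Function.update lo i₀ (lo i₀ + 1), hi, le_update_iff.2 ⟨by omega, fun _ _ => le_rfl⟩,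
      le_rfl, by rw [Function.update_self]; omega,
      fun z hz => ⟨update_le_iff.2 ⟨?_, fun j _ => (hS z hz).1 j⟩, (hS z hz).2⟩⟩
    have : lo i₀ ≤ z i₀ := (hS z hz).1 i₀
    have := h z hz
    omega
  · refine ⟨lo, Function.update hi i₀ (hi i₀ - 1), le_rfl, update_le_iff.2 ⟨by omega,
      fun _ _ => le_rfl⟩, by rw [Function.update_self]; omega, fun z hz => ⟨(hS z hz).1,
      le_update_iff.2 ⟨?_, fun j _ => (hS z hz).2 j⟩⟩⟩
    have : z i₀ ≤ hi i₀ := (hS z hz).2 i₀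
    have := h z hz
    omega

lemma card_filter_wide_lt {lo hi lo' hi' : Fin n → ℤ} {i₀ : Fin n} (hlo : lo ≤ lo')
    (hhi : hi' ≤ hi) (h' : hi' i₀ < lo' i₀ + 2) (hi₀ : lo i₀ + 2 ≤ hi i₀) :
    (Finset.univ.filter fun i => lo' i + 2 ≤ hi' i).card <
      (Finset.univ.filter fun i => lo i + 2 ≤ hi i).card := by
  refine Finset.card_lt_card ((Finset.ssubset_iff_of_subset fun i hi => ?_).2
    ⟨i₀, by simpa using hi₀, by simpa using h'⟩)
  simp only [Finset.mem_filter, Finset.mem_univ, true_and] at hi ⊢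
  linarith [hlo i, hhi i]

def MidpointIneq (f : (Fin n → ℤ) → EReal) : Prop :=
  ∀ x y : Fin n → ℤ, f x ≠ ⊤ → f y ≠ ⊤ →
    ((∀ i, |x i - y i| ≤ 2) ∧ ∃ i, |x i - y i| = 2) →
    localConvexExt f ((2⁻¹ : ℝ) • (coeZR x + coeZR y)) ≤ ((2⁻¹ : ℝ) : EReal) * (f x + f y)

namespace MidpointIneq

variable {f : (Fin n → ℤ) → EReal}

lemma exists_midpoint_realCost_lt (hbot : ∀ z, f z ≠ ⊥) (hmid : MidpointIneq f)
    {z w : Fin n → ℤ} (hz : f z ≠ ⊤) (hw : f w ≠ ⊤) (hzw : ∀ i, |z i - w i| ≤ 2)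
    (hzw₂ : ∃ i, |z i - w i| = 2) {v : ℝ} (hv : ((f z).toReal + (f w).toReal) / 2 < v) :
    ∃ ρ, IsConvexComb ((2⁻¹ : ℝ) • (coeZR z + coeZR w)) ρ ∧
      (∀ p ∈ ρ.support, p ∈ IntNbhd ((2⁻¹ : ℝ) • (coeZR z + coeZR w)) ∧ f p ≠ ⊤) ∧
      realCost f ρ < v := by
  refine exists_realCost_lt_of_localConvexExt_lt hbot ((hmid z w hz hw ⟨hzw, hzw₂⟩).trans_lt ?_)
  rw [← EReal.coe_toReal hz (hbot z), ← EReal.coe_toReal hw (hbot w), ← EReal.coe_add,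
    ← EReal.coe_mul, EReal.coe_lt_coe_iff]
  linarith

lemma exists_exchange (hbot : ∀ z, f z ≠ ⊥) (hmid : MidpointIneq f)
    {x : Fin n → ℝ} {l : (Fin n → ℤ) →₀ ℝ} (hl : IsConvexComb x l)
    (hdom : ∀ p ∈ l.support, f p ≠ ⊤) {z w : Fin n → ℤ} (hz : z ∈ l.support)
    (hw : w ∈ l.support) (hzw : ∀ i, |z i - w i| ≤ 2) {i₀ : Fin n} (hi₀ : |z i₀ - w i₀| = 2)
    {c : ℝ} (hc : realCost f l < c) :
    ∃ l', IsConvexComb x l' ∧ realCost f l' < c ∧ (z ∉ l'.support ∨ w ∉ l'.support) ∧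
      ∀ p ∈ l'.support, f p ≠ ⊤ ∧
        (p ∈ l.support ∨ p ∈ IntNbhd ((2⁻¹ : ℝ) • (coeZR z + coeZR w))) := by
  have hne : z ≠ w := by rintro rfl; simp at hi₀
  -- moving mass `t` from each of `z, w` to `ρ` empties the lighter of the two
  set t := min (l z) (l w)
  have ht : 0 < t := lt_min (hl.pos_of_mem_support hz) (hl.pos_of_mem_support hw)
  have ht₂ : 0 < 2 * t := by positivity
  obtain ⟨ρ, hρ, hρsupp, hρcost⟩ := hmid.exists_midpoint_realCost_lt hbot (hdom z hz)
    (hdom w hw) hzw ⟨i₀, hi₀⟩ (lt_add_of_pos_right _ (div_pos (sub_pos.2 hc) ht₂))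
  have hρz : ρ z = 0 := Finsupp.notMem_support_iff.1 fun h =>
    not_mem_IntNbhd_midpoint hi₀ (hρsupp z h).1
  have hρw : ρ w = 0 := Finsupp.notMem_support_iff.1 fun h =>
    not_mem_IntNbhd_midpoint (z := w) (w := z) (i := i₀) (by rwa [abs_sub_comm])
      (by rw [add_comm]; exact (hρsupp w h).1)
  refine ⟨l - t • (Finsupp.single z 1 + Finsupp.single w 1) + (2 * t) • ρ,
    hl.exchange hρ hne ht.le (min_le_left _ _) (min_le_right _ _), ?_, ?_, fun p hp => ?_⟩
  · have := mul_lt_mul_of_pos_left hρcost ht₂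
    rw [mul_add, mul_div_cancel₀ _ ht₂.ne'] at this
    simp only [map_add, map_sub, map_smul, realCost_single, smul_eq_mul]
    linarith
  · rcases le_total (l z) (l w) with h | h
    · left; simp [hρz, hne, t, min_eq_left h]
    · right; simp [hρw, hne.symm, t, min_eq_right h]
  · by_cases hpl : p ∈ l.support
    · exact ⟨hdom p hpl, Or.inl hpl⟩
    have hpρ : p ∈ ρ.support := by
      by_contra hpρ
      have hpz : z ≠ p := fun h => hpl (h ▸ hz)
      have hpw : w ≠ p := fun h => hpl (h ▸ hw)
      simp_all
    exact ⟨(hρsupp p hpρ).2, Or.inr (hρsupp p hpρ).1⟩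

/-- Induction on the number of support points off the middle layer `lo i₀ + 1`. -/
lemma localConvexExt_le_of_narrow (hbot : ∀ z, f z ≠ ⊥) (hmid : MidpointIneq f)
    {lo hi : Fin n → ℤ} (hbox : ∀ i, hi i ≤ lo i + 2) {i₀ : Fin n} (hi₀ : hi i₀ = lo i₀ + 2)
    {x : Fin n → ℝ}
    (hnarrow : ∀ l, IsConvexComb x l → (∀ z ∈ l.support, f z ≠ ⊤ ∧ z ∈ Set.Icc lo hi) →
      ((∀ z ∈ l.support, z i₀ ≠ lo i₀) ∨ ∀ z ∈ l.support, z i₀ ≠ hi i₀) →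
      localConvexExt f x ≤ realCost f l)
    {l : (Fin n → ℤ) →₀ ℝ} (hl : IsConvexComb x l)
    (hsupp : ∀ z ∈ l.support, f z ≠ ⊤ ∧ z ∈ Set.Icc lo hi) :
    localConvexExt f x ≤ realCost f l := by
  induction hN : (l.support.filter fun z => z i₀ ≠ lo i₀ + 1).card using Nat.strong_induction_on
    generalizing l with
  | _ N ih =>
  by_cases h : (∀ z ∈ l.support, z i₀ ≠ lo i₀) ∨ ∀ z ∈ l.support, z i₀ ≠ hi i₀
  · exact hnarrow l hl hsupp h
  push Not at h
  obtain ⟨⟨w, hw, hwlo⟩, ⟨z, hz, hzhi⟩⟩ := h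
  have hzw : |z i₀ - w i₀| = 2 := by rw [hzhi, hwlo, hi₀]; norm_num
  refine EReal.le_of_forall_lt_iff_le.1 fun c hc => ?_
  obtain ⟨l', hl', hc', hgone, hsupp'⟩ := hmid.exists_exchange hbot hl
    (fun p hp => (hsupp p hp).1) hz hw
    (fun i => abs_sub_le_of_mem_Icc (hsupp z hz).2 (hsupp w hw).2 (hbox i)) hzw
    (EReal.coe_lt_coe_iff.1 hc)
  have hmiddle : ∀ p ∈ IntNbhd ((2⁻¹ : ℝ) • (coeZR z + coeZR w)), p i₀ = lo i₀ + 1 :=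
    fun p hp => apply_eq_of_mem_IntNbhd
      (by rw [midpoint_apply, hzhi, hwlo, hi₀]; push_cast; ring) hp
  have hsupp'' : ∀ p ∈ l'.support, f p ≠ ⊤ ∧ p ∈ Set.Icc lo hi := fun p hp =>
    ⟨(hsupp' p hp).1, (hsupp' p hp).2.elim (fun h => (hsupp p h).2)
      (mem_Icc_of_mem_IntNbhd (midpoint_mem_Icc (hsupp z hz).2 (hsupp w hw).2))⟩
  refine (ih _ ?_ hl' hsupp'' rfl).trans (EReal.coe_le_coe_iff.2 hc'.le)
  rw [← hN]
  refine Finset.card_lt_card ((Finset.ssubset_iff_of_subset fun p hp => ?_).2 ?_)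
  · simp only [Finset.mem_filter] at hp ⊢
    exact ⟨(hsupp' p hp.1).2.resolve_right fun h => hp.2 (hmiddle p h), hp.2⟩
  · rcases hgone with h | h
    · exact ⟨z, by simp [hz, hzhi, hi₀], by simp [h]⟩
    · exact ⟨w, by simp [hw, hwlo], by simp [h]⟩

/-- Induction on the number of coordinates in which the box has side `2`. -/
theorem localConvexExt_le_realCost_of_mem_Icc (hbot : ∀ z, f z ≠ ⊥) (hmid : MidpointIneq f)
    {lo hi : Fin n → ℤ} (hbox : ∀ i, hi i ≤ lo i + 2) {x : Fin n → ℝ}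
    {l : (Fin n → ℤ) →₀ ℝ} (hl : IsConvexComb x l)
    (hsupp : ∀ z ∈ l.support, f z ≠ ⊤ ∧ z ∈ Set.Icc lo hi) :
    localConvexExt f x ≤ realCost f l := by
  induction hN : (Finset.univ.filter fun i => lo i + 2 ≤ hi i).card using Nat.strong_induction_on
    generalizing lo hi l with
  | _ N ih =>
  by_cases hwide : ∃ i₀, lo i₀ + 2 ≤ hi i₀
  · obtain ⟨i₀, hi₀⟩ := hwide
    refine hmid.localConvexExt_le_of_narrow hbot hbox (le_antisymm (hbox i₀) hi₀)
      (fun l' hl' hsupp' hnarrow => ?_) hl hsupp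
    obtain ⟨lo', hi', hlo, hhi, hnar, hS⟩ := exists_Icc_narrow (fun z hz => (hsupp' z hz).2)
      (le_antisymm (hbox i₀) hi₀) hnarrow
    exact ih _ (hN ▸ card_filter_wide_lt hlo hhi hnar hi₀)
      (fun i => by linarith [hlo i, hhi i, hbox i]) hl' (fun z hz => ⟨(hsupp' z hz).1, hS z hz⟩) rfl
  · push Not at hwide
    refine localConvexExt_le_realCost hbot hl (fun z hz => hl.mem_IntNbhd ?_ hz)
      fun z hz => (hsupp z hz).1
    exact fun w hw z hz i => abs_sub_le_of_mem_Icc (hsupp w hw).2 (hsupp z hz).2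
      (by linarith [hwide i])

end MidpointIneq

end Reduction

section Convexity

lemma le_div_sub_of_le_of_le {L A B C y w z : ℝ} (hyw : y < w) (hwz : w < z)
    (h₁ : L ≤ (B - A) / (w - y)) (h₂ : L ≤ (C - B) / (z - w)) : L ≤ (C - A) / (z - y) := by
  rw [le_div_iff₀ (by linarith)] at h₁ h₂ ⊢
  linarith

lemma div_sub_le_of_le_of_le {U A B C y w z : ℝ} (hyw : y < w) (hwz : w < z)
    (h₁ : (B - A) / (w - y) ≤ U) (h₂ : (C - B) / (z - w) ≤ U) : (C - A) / (z - y) ≤ U := by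
  rw [div_le_iff₀ (by linarith)] at h₁ h₂ ⊢
  linarith

lemma ConvexOn.union_Icc {φ : ℝ → ℝ} {a p c b : ℝ} (h₁ : ConvexOn ℝ (Set.Icc a c) φ)
    (h₂ : ConvexOn ℝ (Set.Icc p b) φ) (hpc : p < c) : ConvexOn ℝ (Set.Icc a b) φ := by
  refine convexOn_of_slope_mono_adjacent (convex_Icc a b) fun {x y z} hx hz hxy hyz => ?_
  obtain ⟨hxa, -⟩ := hx
  obtain ⟨-, hzb⟩ := hz
  by_cases hzc : z ≤ c
  · exact h₁.slope_mono_adjacent ⟨hxa, by linarith⟩ ⟨by linarith, hzc⟩ hxy hyz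
  by_cases hpx : p ≤ x
  · exact h₂.slope_mono_adjacent ⟨hpx, by linarith⟩ ⟨by linarith, hzb⟩ hxy hyz
  push Not at hzc hpx
  by_cases hyc : y < c
  · -- split `[y, z]` at a point `w` of the overlap to the right of `y`
    obtain ⟨q, hq, hqc⟩ := exists_between (max_lt hpc hyc)
    obtain ⟨w, hqw, hwc⟩ := exists_between hqc
    have hpq := (le_max_left p y).trans_lt hq
    have hyq := (le_max_right p y).trans_lt hq
    have s₁ := h₁.slope_mono_adjacent ⟨hxa, by linarith⟩ ⟨by linarith, hqc.le⟩ hxy hyq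
    have s₂ := h₁.slope_mono_adjacent ⟨by linarith, by linarith⟩ ⟨by linarith, hwc.le⟩ hyq hqw
    have s₃ := h₂.slope_mono_adjacent ⟨hpq.le, by linarith⟩ ⟨by linarith, hzb⟩ hqw
      (by linarith)
    have s₄ := h₁.slope_mono_adjacent ⟨hxa, by linarith⟩ ⟨by linarith, hwc.le⟩ hxy
      (hyq.trans hqw)
    exact le_div_sub_of_le_of_le (by linarith) (by linarith) s₄ (s₁.trans (s₂.trans s₃))
  · -- split `[x, y]` at a point `w` of the overlap
    push Not at hyc
    obtain ⟨w, hpw, hwc⟩ := exists_between hpc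
    obtain ⟨q, hwq, hqc⟩ := exists_between hwc
    have s₁ := h₁.slope_mono_adjacent ⟨hxa, by linarith⟩ ⟨by linarith, hqc.le⟩ (by linarith) hwq
    have s₂ := h₂.slope_mono_adjacent ⟨hpw.le, by linarith⟩ ⟨by linarith, by linarith⟩ hwq
      (hqc.trans_le hyc)
    have s₃ := h₂.slope_mono_adjacent ⟨by linarith, by linarith⟩ ⟨by linarith, hzb⟩
      (hqc.trans_le hyc) hyz
    have s₄ := h₂.slope_mono_adjacent ⟨hpw.le, by linarith⟩ ⟨by linarith, hzb⟩ (by linarith) hyz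
    exact div_sub_le_of_le_of_le (by linarith) (by linarith) (s₁.trans (s₂.trans s₃)) s₄

lemma convexOn_Icc_of_forall_convexOn_Icc {φ : ℝ → ℝ} {a b δ : ℝ} (hδ : 0 < δ)
    (h : ∀ s t, a ≤ s → t ≤ b → t - s ≤ δ → ConvexOn ℝ (Set.Icc s t) φ) :
    ConvexOn ℝ (Set.Icc a b) φ := by
  have key : ∀ k : ℕ, ConvexOn ℝ (Set.Icc a (min b (a + (k + 1) * (δ / 2)))) φ := by
    intro k
    induction k with
    | zero =>
      exact h _ _ le_rfl (min_le_left _ _) (by linarith [min_le_right b (a + (0 + 1) * (δ / 2))])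
    | succ k ih =>
      by_cases hk : b ≤ a + (k + 1) * (δ / 2)
      · rwa [min_eq_left hk, min_eq_left (by push_cast; linarith)] at *
      push Not at hk
      rw [min_eq_right hk.le] at ih
      refine ih.union_Icc (p := a + k * (δ / 2))
        (h _ _ (le_add_of_nonneg_right (by positivity)) (min_le_left _ _) ?_) (by linarith)
      push_cast
      linarith [min_le_right b (a + (k + 1 + 1) * (δ / 2))]
  obtain ⟨k, hk⟩ := exists_nat_ge ((b - a) / (δ / 2))
  rw [div_le_iff₀ (by positivity)] at hk
  simpa [min_eq_left (show b ≤ a + (k + 1) * (δ / 2) by linarith)] using key k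

lemma erealConvexOn_of_toReal {g : (Fin n → ℝ) → EReal} (hg : ∀ x, g x ≠ ⊥)
    (h : ∀ x y, g x ≠ ⊤ → g y ≠ ⊤ → ∀ a b : ℝ, 0 ≤ a → 0 ≤ b → a + b = 1 →
      g (a • x + b • y) ≤ ((a * (g x).toReal + b * (g y).toReal : ℝ) : EReal)) :
    ERealConvexOn g := by
  intro x y a b ha hb hab
  rcases ha.eq_or_lt with rfl | ha
  · obtain rfl : b = 1 := by linarith
    simp
  rcases hb.eq_or_lt with rfl | hb
  · obtain rfl : a = 1 := by linarith
    simp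
  by_cases hx : g x = ⊤
  · rw [hx, EReal.coe_mul_top_of_pos ha, EReal.top_add_of_ne_bot
      (ne_bot_of_le_ne_bot (EReal.coe_ne_bot _) (EReal.coe_mul_toReal_le hb.le (hg y)))]
    exact le_top
  by_cases hy : g y = ⊤
  · rw [hy, EReal.coe_mul_top_of_pos hb, EReal.add_top_of_ne_bot
      (ne_bot_of_le_ne_bot (EReal.coe_ne_bot _) (EReal.coe_mul_toReal_le ha.le (hg x)))]
    exact le_top
  refine (h x y hx hy a b ha.le hb.le hab).trans_eq ?_
  rw [EReal.coe_add, EReal.coe_mul, EReal.coe_mul, EReal.coe_toReal hx (hg x),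
    EReal.coe_toReal hy (hg y)]

lemma abs_segment_sub_le (u v : Fin n → ℝ) (s t : ℝ) (i : Fin n) :
    |(u + s • (v - u)) i - (u + t • (v - u)) i| ≤ |s - t| * ‖v - u‖ := by
  have hi : |v i - u i| ≤ ‖v - u‖ := by simpa using norm_le_pi_norm (v - u) i
  calc |(u + s • (v - u)) i - (u + t • (v - u)) i| = |s - t| * |v i - u i| := by
        rw [← abs_mul]
        simp only [Pi.add_apply, Pi.smul_apply, Pi.sub_apply, smul_eq_mul]
        ring_nf
    _ ≤ |s - t| * ‖v - u‖ := mul_le_mul_of_nonneg_left hi (abs_nonneg _)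

variable {f : (Fin n → ℤ) → EReal}

lemma localConvexExt_segment_ne_top (hbot : ∀ z, f z ≠ ⊥)
    (hdom : IntegrallyConvexSet {z | f z ≠ ⊤}) {u v : Fin n → ℝ} (hu : localConvexExt f u ≠ ⊤)
    (hv : localConvexExt f v ≠ ⊤) {t : ℝ} (ht : t ∈ Set.Icc (0 : ℝ) 1) :
    localConvexExt f (u + t • (v - u)) ≠ ⊤ := by
  refine localConvexExt_ne_top_of_mem_convexHull hbot hdom ?_
  convert (convex_convexHull ℝ _) (mem_convexHull_of_localConvexExt_ne_top hbot hu)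
    (mem_convexHull_of_localConvexExt_ne_top hbot hv) (sub_nonneg.2 ht.2) ht.1 (by ring) using 1
  module

namespace MidpointIneq

lemma localConvexExt_smul_add_le (hbot : ∀ z, f z ≠ ⊥) (hmid : MidpointIneq f)
    {y z : Fin n → ℝ} (hyz : ∀ i, |y i - z i| ≤ 1 / 2) (hy : localConvexExt f y ≠ ⊤)
    (hz : localConvexExt f z ≠ ⊤) {a b : ℝ} (ha : 0 ≤ a) (hb : 0 ≤ b) (hab : a + b = 1) :
    localConvexExt f (a • y + b • z) ≤
      ((a * (localConvexExt f y).toReal + b * (localConvexExt f z).toReal : ℝ) : EReal) := by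
  classical
  refine EReal.le_of_forall_lt_iff_le.1 fun c hc => ?_
  set ε := c - (a * (localConvexExt f y).toReal + b * (localConvexExt f z).toReal)
  have hε : 0 < ε := sub_pos.2 (EReal.coe_lt_coe_iff.1 hc)
  have hlt : ∀ w, localConvexExt f w ≠ ⊤ →
      localConvexExt f w < (((localConvexExt f w).toReal + ε : ℝ) : EReal) := fun w hw => by
    rw [← EReal.coe_toReal hw (localConvexExt_ne_bot hbot w), EReal.coe_lt_coe_iff,
      EReal.toReal_coe]
    linarith
  obtain ⟨l₁, hl₁, hs₁, hc₁⟩ := exists_realCost_lt_of_localConvexExt_lt hbot (hlt y hy)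
  obtain ⟨l₂, hl₂, hs₂, hc₂⟩ := exists_realCost_lt_of_localConvexExt_lt hbot (hlt z hz)
  -- every point of the mixture is within `3/2` of `y`, so it lies in a box of side `2`
  have hsupp : ∀ p ∈ (a • l₁ + b • l₂).support, f p ≠ ⊤ ∧
      p ∈ Set.Icc (fun i => ⌈y i - 3 / 2⌉) (fun i => ⌈y i - 3 / 2⌉ + 2) := fun p hp => by
    have hp' := Finset.mem_union.1 (Finsupp.support_add hp)
    have hnear : ∀ i, |(p i : ℝ) - y i| < 3 / 2 := fun i => by
      rcases hp' with h | h
      · have := (hs₁ p (Finsupp.support_smul h)).1 i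
        rw [abs_sub_comm] at this
        linarith
      · have := (hs₂ p (Finsupp.support_smul h)).1 i
        rw [abs_sub_comm] at this
        linarith [abs_sub_le (p i : ℝ) (z i) (y i), abs_sub_comm (y i) (z i), hyz i]
    exact ⟨hp'.elim (fun h => (hs₁ p (Finsupp.support_smul h)).2)
      fun h => (hs₂ p (Finsupp.support_smul h)).2, mem_Icc_ceil_of_abs_sub_lt (by norm_num) hnear⟩
  refine (hmid.localConvexExt_le_realCost_of_mem_Icc hbot (fun i => le_rfl) (hl₁.mix hl₂ ha hb hab)
    hsupp).trans (EReal.coe_le_coe_iff.2 ?_)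
  simp only [map_add, map_smul, smul_eq_mul]
  nlinarith [mul_le_mul_of_nonneg_left hc₁.le ha, mul_le_mul_of_nonneg_left hc₂.le hb]

lemma convexOn_segment (hbot : ∀ z, f z ≠ ⊥) (hdom : IntegrallyConvexSet {z | f z ≠ ⊤})
    (hmid : MidpointIneq f) {u v : Fin n → ℝ} (hu : localConvexExt f u ≠ ⊤)
    (hv : localConvexExt f v ≠ ⊤) :
    ConvexOn ℝ (Set.Icc (0 : ℝ) 1) fun t => (localConvexExt f (u + t • (v - u))).toReal := by
  refine convexOn_Icc_of_forall_convexOn_Icc (δ := 1 / (2 * (‖v - u‖ + 1))) (by positivity)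
    fun s t hs ht hst => ⟨convex_Icc s t, fun s' hs' t' ht' α β hα hβ hαβ => ?_⟩
  have hclose : ∀ i, |(u + s' • (v - u)) i - (u + t' • (v - u)) i| ≤ 1 / 2 := fun i => by
    refine (abs_segment_sub_le u v s' t' i).trans ?_
    have : |s' - t'| ≤ 1 / (2 * (‖v - u‖ + 1)) :=
      abs_sub_le_iff.2 ⟨by linarith [hs'.2, ht'.1], by linarith [hs'.1, ht'.2]⟩
    calc |s' - t'| * ‖v - u‖ ≤ 1 / (2 * (‖v - u‖ + 1)) * ‖v - u‖ :=
          mul_le_mul_of_nonneg_right this (norm_nonneg _)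
      _ ≤ 1 / 2 := by
          rw [div_mul_eq_mul_div, one_mul, div_le_div_iff₀ (by positivity) two_pos]
          linarith [norm_nonneg (v - u)]
  have hcomb : u + (α • s' + β • t') • (v - u) =
      α • (u + s' • (v - u)) + β • (u + t' • (v - u)) := by
    obtain rfl : β = 1 - α := by linarith
    simp only [smul_eq_mul]
    module
  have := hmid.localConvexExt_smul_add_le hbot hclose
    (localConvexExt_segment_ne_top hbot hdom hu hv ⟨by linarith [hs'.1], by linarith [hs'.2]⟩)
    (localConvexExt_segment_ne_top hbot hdom hu hv ⟨by linarith [ht'.1], by linarith [ht'.2]⟩)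
    hα hβ hαβ
  rw [← hcomb] at this
  exact (EReal.toReal_le_toReal this (localConvexExt_ne_bot hbot _)
    (EReal.coe_ne_top _)).trans_eq (EReal.toReal_coe _)

theorem integrallyConvexFn (hbot : ∀ z, f z ≠ ⊥) (hdom : IntegrallyConvexSet {z | f z ≠ ⊤})
    (hmid : MidpointIneq f) : IntegrallyConvexFn f := by
  refine erealConvexOn_of_toReal (localConvexExt_ne_bot hbot) fun u v hu hv a b ha hb hab => ?_
  have h := (hmid.convexOn_segment hbot hdom hu hv).2 ⟨le_rfl, zero_le_one⟩
    ⟨zero_le_one, le_rfl⟩ ha hb hab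
  obtain rfl : a = 1 - b := by linarith
  simp only [smul_eq_mul, mul_zero, mul_one, zero_add, zero_smul, add_zero, one_smul,
    add_sub_cancel] at h
  have hseg : u + b • (v - u) = (1 - b) • u + b • v := by module
  rw [← hseg, ← EReal.coe_toReal (localConvexExt_segment_ne_top hbot hdom hu hv ⟨hb, by linarith⟩)
    (localConvexExt_ne_bot hbot _), EReal.coe_le_coe_iff]
  exact h

end MidpointIneq

theorem IntegrallyConvexFn.midpointIneq {f : (Fin n → ℤ) → EReal} (hf : IntegrallyConvexFn f) :
    MidpointIneq f := by
  intro x y _ _ _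
  have h0 : (0 : EReal) ≤ ((2⁻¹ : ℝ) : EReal) := EReal.coe_nonneg.2 (by norm_num)
  rw [smul_add, EReal.left_distrib_of_nonneg_of_ne_top h0 (EReal.coe_ne_top _)]
  exact (hf _ _ _ _ (by norm_num) (by norm_num) (by norm_num)).trans
    (add_le_add (mul_le_mul_of_nonneg_left (localConvexExt_coeZR_le f x) h0)
      (mul_le_mul_of_nonneg_left (localConvexExt_coeZR_le f y) h0))

end Convexity

theorem stmt10_general {n : ℕ} (f : (Fin n → ℤ) → EReal) (hbot : ∀ z, f z ≠ ⊥)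
    (hdom : IntegrallyConvexSet {z : Fin n → ℤ | f z ≠ ⊤}) :
    IntegrallyConvexFn f ↔
      ∀ x y : Fin n → ℤ, f x ≠ ⊤ → f y ≠ ⊤ →
        ((∀ i, |x i - y i| ≤ 2) ∧ ∃ i, |x i - y i| = 2) →
        localConvexExt f ((2⁻¹ : ℝ) • (coeZR x + coeZR y)) ≤
          ((2⁻¹ : ℝ) : EReal) * (f x + f y) :=
  ⟨IntegrallyConvexFn.midpointIneq, MidpointIneq.integrallyConvexFn hbot hdom⟩

theorem stmt10 {n : ℕ} (f : (Fin n → ℤ) → EReal) (hbot : ∀ z, f z ≠ ⊥)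
    (hne : ({z : Fin n → ℤ | f z ≠ ⊤}).Nonempty)
    (hdom : IntegrallyConvexSet {z : Fin n → ℤ | f z ≠ ⊤}) :
    IntegrallyConvexFn f ↔
      ∀ x y : Fin n → ℤ, f x ≠ ⊤ → f y ≠ ⊤ →
        ((∀ i, |x i - y i| ≤ 2) ∧ ∃ i, |x i - y i| = 2) →
        localConvexExt f ((2⁻¹ : ℝ) • (coeZR x + coeZR y)) ≤
          ((2⁻¹ : ℝ) : EReal) * (f x + f y) :=
  stmt10_general f hbot hdom
end
end
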